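/- arXiv:1207.3165 — 14 statements merged into one kernel-verified Lean document; each statement's English description precedes it below -/
import Mathlib

section
/- Let k ≥ 1 and M ≥ 1, let Y ⊆ ℤ^k be a finite nonempty set of objective vectors with Y ⊆ [0,M]^k, and let r ∈ ℤ^k be a feasible reference point. If p is a real number with p > (log k)/(log(1 + 1/M)), then for every Pareto optimal y ∈ Y there exists a weight vector λ ∈ ℚ^k with nonnegative components such that for every y' ∈ Y with y' ≠ y one has ‖y − r‖_p^λ < ‖y' − r‖_p^λ; in particular, y is the unique minimizer over Y of the weighted ℓ^p distance to the reference point r. -/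
/-- For `p > log k / log (1 + 1/M)`, every Pareto optimal `y ∈ Y` is the
unique minimizer of the weighted `ℓ^p`-distance to a feasible reference point `r`,
for a suitable nonnegative weight vector `λ ∈ ℚ^k`. -/
theorem pareto_is_unique_lp_reference_point_solution
    (k : ℕ) (hk : 1 ≤ k) (M : ℝ) (hM : 1 ≤ M)
    (Y : Finset (Fin k → ℤ)) (hYne : Y.Nonempty)
    (hYbound : ∀ y ∈ Y, ∀ i, (0 : ℤ) ≤ y i ∧ (y i : ℝ) ≤ M)
    (r : Fin k → ℤ) (hr0 : ∀ i, 0 ≤ r i)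
    (hrfeas : ∀ y ∈ Y, ∀ i, r i ≤ y i)
    (p : ℝ) (hp : p > Real.log k / Real.log (1 + 1 / M))
    (y : Fin k → ℤ) (hy : y ∈ Y)
    (hpareto : ¬ ∃ y' ∈ Y, y' ≠ y ∧ ∀ i, y' i ≤ y i) :
    ∃ lam : Fin k → ℚ, (∀ i, 0 ≤ lam i) ∧
      ∀ y' ∈ Y, y' ≠ y →
        (∑ i, ((lam i : ℝ) * |(y i : ℝ) - (r i : ℝ)|) ^ p) ^ (1 / p) <
        (∑ i, ((lam i : ℝ) * |(y' i : ℝ) - (r i : ℝ)|) ^ p) ^ (1 / p) := by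
  have hM0 : (0:ℝ) < M := lt_of_lt_of_le one_pos hM
  have hM1 : (0:ℝ) < M + 1 := by linarith
  have ht0 : (0:ℝ) < M / (M + 1) := by positivity
  have hlog : 0 < Real.log (1 + 1 / M) := Real.log_pos (by
    have : (0:ℝ) < 1 / M := by positivity
    linarith)
  have hk1 : (1:ℝ) ≤ (k:ℝ) := by exact_mod_cast hk
  have hk0 : (0:ℝ) < (k:ℝ) := lt_of_lt_of_le one_pos hk1
  have hlogk : 0 ≤ Real.log k := Real.log_nonneg hk1
  have hp0 : 0 < p := lt_of_le_of_lt (div_nonneg hlogk hlog.le) hp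
  have hkey : (k:ℝ) * (M / (M + 1)) ^ p < 1 := by
    have h1 : Real.log k < p * Real.log (1 + 1 / M) := by
      rw [gt_iff_lt, div_lt_iff₀ hlog] at hp
      exact hp
    have hneg : Real.log (M / (M + 1)) = - Real.log (1 + 1 / M) := by
      rw [← Real.log_inv]
      congr 1
      field_simp
    have h2 : Real.log ((k:ℝ) * (M / (M + 1)) ^ p) < 0 := by
      rw [Real.log_mul (ne_of_gt hk0) (ne_of_gt (Real.rpow_pos_of_pos ht0 p)),
        Real.log_rpow ht0, hneg]
      linarith
    have hpos : (0:ℝ) < (k:ℝ) * (M / (M + 1)) ^ p := by positivity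
    exact (Real.log_neg_iff hpos).mp h2
  have hz : ∀ i, (0:ℝ) ≤ (y i : ℝ) - (r i : ℝ) := by
    intro i
    have h := hrfeas y hy i
    have : (r i : ℝ) ≤ (y i : ℝ) := by exact_mod_cast h
    linarith
  have hzM : ∀ i, (y i : ℝ) - (r i : ℝ) ≤ M := by
    intro i
    have h1 := (hYbound y hy i).2
    have h2 : (0:ℝ) ≤ (r i : ℝ) := by exact_mod_cast hr0 i
    linarith
  set lam : Fin k → ℚ := fun i => (((y i - r i : ℤ) : ℚ) + 1)⁻¹ with hlam
  have hlamR : ∀ i, ((lam i : ℚ) : ℝ) = ((y i : ℝ) - (r i : ℝ) + 1)⁻¹ := by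
    intro i
    simp only [hlam]
    push_cast
    ring_nf
  have hden : ∀ i, (0:ℝ) < (y i : ℝ) - (r i : ℝ) + 1 := by
    intro i; have := hz i; linarith
  refine ⟨lam, ?_, ?_⟩
  · intro i
    rw [hlam]
    have h := hrfeas y hy i
    have : (0:ℚ) ≤ ((y i - r i : ℤ) : ℚ) := by exact_mod_cast sub_nonneg.mpr h
    positivity
  · intro y' hy' hne
    -- LHS sum < 1
    have hLHS : ∑ i, (((lam i : ℚ) : ℝ) * |(y i : ℝ) - (r i : ℝ)|) ^ p < 1 := by
      have hterm : ∀ i : Fin k,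
          (((lam i : ℚ) : ℝ) * |(y i : ℝ) - (r i : ℝ)|) ^ p ≤ (M / (M + 1)) ^ p := by
        intro i
        apply Real.rpow_le_rpow
        · have := hz i
          have := hlamR i
          rw [this, abs_of_nonneg (hz i)]
          positivity
        · rw [hlamR i, abs_of_nonneg (hz i)]
          rw [inv_mul_le_iff₀ (hden i), ← mul_div_assoc, le_div_iff₀ hM1]
          nlinarith [hz i, hzM i]
        · exact hp0.le
      calc ∑ i, (((lam i : ℚ) : ℝ) * |(y i : ℝ) - (r i : ℝ)|) ^ p
          ≤ ∑ _i : Fin k, (M / (M + 1)) ^ p := Finset.sum_le_sum (fun i _ => hterm i)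
        _ = (k:ℝ) * (M / (M + 1)) ^ p := by
            rw [Finset.sum_const, Finset.card_univ, Fintype.card_fin, nsmul_eq_mul]
        _ < 1 := hkey
    -- RHS sum ≥ 1
    have hRHS : (1:ℝ) ≤ ∑ i, (((lam i : ℚ) : ℝ) * |(y' i : ℝ) - (r i : ℝ)|) ^ p := by
      push_neg at hpareto
      obtain ⟨j, hj⟩ := by
        have := hpareto y' hy' hne
        exact this
      -- hj : y j < y' j
      have hz'j : (0:ℝ) ≤ (y' j : ℝ) - (r j : ℝ) := by
        have h := hrfeas y' hy' j
        have : (r j : ℝ) ≤ (y' j : ℝ) := by exact_mod_cast h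
        linarith
      have h1 : (1:ℝ) ≤ ((lam j : ℚ) : ℝ) * |(y' j : ℝ) - (r j : ℝ)| := by
        rw [hlamR j, abs_of_nonneg hz'j]
        rw [le_inv_mul_iff₀ (hden j)]
        have : y j + 1 ≤ y' j := hj
        have : ((y j : ℝ)) + 1 ≤ (y' j : ℝ) := by exact_mod_cast this
        linarith
      have h2 : (1:ℝ) ≤ (((lam j : ℚ) : ℝ) * |(y' j : ℝ) - (r j : ℝ)|) ^ p := by
        calc (1:ℝ) = 1 ^ p := (Real.one_rpow p).symm
          _ ≤ _ := Real.rpow_le_rpow zero_le_one h1 hp0.le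
      refine le_trans h2 (Finset.single_le_sum
        (f := fun i => (((lam i : ℚ) : ℝ) * |(y' i : ℝ) - (r i : ℝ)|) ^ p)
        (fun i _ => ?_) (Finset.mem_univ j))
      apply Real.rpow_nonneg
      have hz'i : (0:ℝ) ≤ (y' i : ℝ) - (r i : ℝ) := by
        have h := hrfeas y' hy' i
        have : (r i : ℝ) ≤ (y' i : ℝ) := by exact_mod_cast h
        linarith
      rw [hlamR i, abs_of_nonneg hz'i]
      exact mul_nonneg (inv_nonneg.mpr (hden i).le) hz'i
    have hLHS0 : (0:ℝ) ≤ ∑ i, (((lam i : ℚ) : ℝ) * |(y i : ℝ) - (r i : ℝ)|) ^ p := by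
      apply Finset.sum_nonneg
      intro i _
      apply Real.rpow_nonneg
      rw [hlamR i, abs_of_nonneg (hz i)]
      exact mul_nonneg (inv_nonneg.mpr (hden i).le) (hz i)
    exact Real.rpow_lt_rpow hLHS0 (lt_of_lt_of_le hLHS hRHS) (by positivity)
end

section
/- Let k ≥ 1 and M ≥ 1, let Y ⊆ ℤ^k be a finite nonempty set of objective vectors with Y ⊆ [0,M]^k, and let r ∈ ℤ^k be a feasible reference point. If p is a real number with p > kM, then for every Pareto optimal y ∈ Y there exists a weight vector λ ∈ ℚ^k with nonnegative components such that for every y' ∈ Y with y' ≠ y one has ⦀y − r⦀_p^λ < ⦀y' − r⦀_p^λ; in particular, y is the unique minimizer over Y of the weighted cornered p-norm distance to the reference point r. -/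
/-- For `p > k·M`, every Pareto optimal `y ∈ Y` is the unique minimizer of the
weighted cornered `p`-norm distance `⦀z⦀_p^λ = max_i λ_i|z_i| + (1/p)∑_i λ_i|z_i|` to a
feasible reference point `r`, for a suitable nonnegative weight vector `λ ∈ ℚ^k`. -/
theorem pareto_is_unique_cornered_reference_point_solution
    (k : ℕ) (hk : 1 ≤ k) (M : ℝ) (hM : 1 ≤ M)
    (Y : Finset (Fin k → ℤ)) (hYne : Y.Nonempty)
    (hYbound : ∀ y ∈ Y, ∀ i, (0 : ℤ) ≤ y i ∧ (y i : ℝ) ≤ M)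
    (r : Fin k → ℤ) (hr0 : ∀ i, 0 ≤ r i)
    (hrfeas : ∀ y ∈ Y, ∀ i, r i ≤ y i)
    (p : ℝ) (hp : p > k * M)
    (y : Fin k → ℤ) (hy : y ∈ Y)
    (hpareto : ¬ ∃ y' ∈ Y, y' ≠ y ∧ ∀ i, y' i ≤ y i) :
    ∃ lam : Fin k → ℚ, (∀ i, 0 ≤ lam i) ∧
      ∀ y' ∈ Y, y' ≠ y →
        ((⨆ i, (lam i : ℝ) * |(y i : ℝ) - (r i : ℝ)|) +
          (1 / p) * ∑ i, (lam i : ℝ) * |(y i : ℝ) - (r i : ℝ)|) <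
        ((⨆ i, (lam i : ℝ) * |(y' i : ℝ) - (r i : ℝ)|) +
          (1 / p) * ∑ i, (lam i : ℝ) * |(y' i : ℝ) - (r i : ℝ)|) := by
  haveI : Nonempty (Fin k) := ⟨⟨0, hk⟩⟩
  have hk1 : (1 : ℝ) ≤ (k : ℝ) := by exact_mod_cast hk
  have hM0 : (0 : ℝ) < M := by linarith
  have hp0 : (0 : ℝ) < p := by nlinarith
  set lam : Fin k → ℚ := fun i => if y i = r i then 2 else (((y i - r i : ℤ) : ℚ))⁻¹ with hlam
  have hanneg : ∀ i, (0 : ℤ) ≤ y i - r i := fun i => by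
    have := hrfeas y hy i; omega
  refine ⟨lam, ?_, ?_⟩
  · intro i
    simp only [hlam]
    split
    · norm_num
    · exact inv_nonneg.mpr (by exact_mod_cast hanneg _)
  intro y' hy' hne
  have hjex : ∃ i, y i < y' i := by
    by_contra hno
    push_neg at hno
    exact hpareto ⟨y', hy', hne, hno⟩
  obtain ⟨j, hj⟩ := hjex
  -- terms at y are 0 or 1
  have hterm : ∀ i, (lam i : ℝ) * |(y i : ℝ) - (r i : ℝ)| ≤ 1 := by
    intro i
    simp only [hlam]
    by_cases h : y i = r i
    · simp [h]
    · rw [if_neg h]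
      have h1 : (1 : ℤ) ≤ y i - r i := by have := hanneg i; omega
      have h1R : (1 : ℝ) ≤ (y i : ℝ) - (r i : ℝ) := by exact_mod_cast h1
      rw [abs_of_nonneg (by linarith)]
      push_cast
      rw [inv_mul_le_iff₀ (by linarith)]
      linarith
  have htermnn : ∀ i, 0 ≤ (lam i : ℝ) * |(y i : ℝ) - (r i : ℝ)| := by
    intro i
    have : (0:ℚ) ≤ lam i := by
      simp only [hlam]; split
      · norm_num
      · exact inv_nonneg.mpr (by exact_mod_cast hanneg _)
    have h0 : (0:ℝ) ≤ (lam i : ℝ) := by exact_mod_cast this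
    positivity
  have hsup1 : (⨆ i, (lam i : ℝ) * |(y i : ℝ) - (r i : ℝ)|) ≤ 1 := ciSup_le hterm
  have hsum : (∑ i, (lam i : ℝ) * |(y i : ℝ) - (r i : ℝ)|) ≤ (k : ℝ) := by
    calc (∑ i, (lam i : ℝ) * |(y i : ℝ) - (r i : ℝ)|)
        ≤ ∑ _i : Fin k, (1:ℝ) := Finset.sum_le_sum (fun i _ => hterm i)
      _ = (k : ℝ) := by simp
  -- key lower bound on the j-th term of y'
  have hja : r j ≤ y' j := hrfeas y' hy' j
  have hjR : ((y j : ℝ)) + 1 ≤ (y' j : ℝ) := by exact_mod_cast hj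
  have habs' : |(y' j : ℝ) - (r j : ℝ)| = (y' j : ℝ) - (r j : ℝ) := by
    rw [abs_of_nonneg]
    have : (r j : ℝ) ≤ (y' j : ℝ) := by exact_mod_cast hja
    linarith
  have hkey : 1 + 1 / M ≤ (lam j : ℝ) * |(y' j : ℝ) - (r j : ℝ)| := by
    rw [habs']
    simp only [hlam]
    by_cases h : y j = r j
    · rw [if_pos h]
      have : (y j : ℝ) = (r j : ℝ) := by exact_mod_cast h
      have h2 : (1 : ℝ) ≤ (y' j : ℝ) - (r j : ℝ) := by linarith
      have hMi : 1 / M ≤ 1 := by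
        rw [div_le_one hM0]; linarith
      push_cast
      nlinarith
    · rw [if_neg h]
      have h1 : (1 : ℤ) ≤ y j - r j := by have := hanneg j; omega
      have h1R : (1 : ℝ) ≤ (y j : ℝ) - (r j : ℝ) := by exact_mod_cast h1
      have haM : (y j : ℝ) - (r j : ℝ) ≤ M := by
        have h2 := (hYbound y hy j).2
        have h3 : (0:ℝ) ≤ (r j : ℝ) := by exact_mod_cast hr0 j
        linarith
      push_cast
      set a : ℝ := (y j : ℝ) - (r j : ℝ) with ha
      have ha0 : 0 < a := by linarith
      have h2 : a + 1 ≤ (y' j : ℝ) - (r j : ℝ) := by linarith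
      have h3 : a⁻¹ * (a + 1) ≤ a⁻¹ * ((y' j : ℝ) - (r j : ℝ)) := by
        apply mul_le_mul_of_nonneg_left h2 (by positivity)
      have h4 : a⁻¹ * (a + 1) = 1 + a⁻¹ := by field_simp
      have h5 : 1 / M ≤ a⁻¹ := by
        rw [← one_div]
        exact one_div_le_one_div_of_le ha0 haM
      linarith
  have hbdd : BddAbove (Set.range fun i => (lam i : ℝ) * |(y' i : ℝ) - (r i : ℝ)|) :=
    Set.Finite.bddAbove (Set.finite_range _)
  have hsup' : (lam j : ℝ) * |(y' j : ℝ) - (r j : ℝ)| ≤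
      ⨆ i, (lam i : ℝ) * |(y' i : ℝ) - (r i : ℝ)| := le_ciSup hbdd j
  have hsumnn' : 0 ≤ ∑ i, (lam i : ℝ) * |(y' i : ℝ) - (r i : ℝ)| := by
    apply Finset.sum_nonneg
    intro i _
    have : (0:ℚ) ≤ lam i := by
      simp only [hlam]; split
      · norm_num
      · exact inv_nonneg.mpr (by exact_mod_cast hanneg _)
    have h0 : (0:ℝ) ≤ (lam i : ℝ) := by exact_mod_cast this
    positivity
  have hgap : (1:ℝ) + (1/p) * k < 1 + 1/M := by
    have : (k:ℝ)/p < 1/M := by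
      rw [div_lt_div_iff₀ hp0 hM0]
      linarith
    have h' : (1/p) * k = (k:ℝ)/p := by ring
    linarith [h' ▸ this]
  have hLHS : (⨆ i, (lam i : ℝ) * |(y i : ℝ) - (r i : ℝ)|) +
      (1 / p) * ∑ i, (lam i : ℝ) * |(y i : ℝ) - (r i : ℝ)| ≤ 1 + (1/p) * k := by
    have h1p : 0 ≤ 1/p := by positivity
    have := mul_le_mul_of_nonneg_left hsum h1p
    linarith
  have h1pnn : 0 ≤ (1/p) * ∑ i, (lam i : ℝ) * |(y' i : ℝ) - (r i : ℝ)| := by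
    have h1p : (0:ℝ) ≤ 1/p := by positivity
    exact mul_nonneg h1p hsumnn'
  calc (⨆ i, (lam i : ℝ) * |(y i : ℝ) - (r i : ℝ)|) +
      (1 / p) * ∑ i, (lam i : ℝ) * |(y i : ℝ) - (r i : ℝ)|
      ≤ 1 + (1/p) * k := hLHS
    _ < 1 + 1/M := hgap
    _ ≤ (lam j : ℝ) * |(y' j : ℝ) - (r j : ℝ)| := hkey
    _ ≤ (⨆ i, (lam i : ℝ) * |(y' i : ℝ) - (r i : ℝ)|) := hsup'
    _ ≤ _ := by linarith
end

section
/- Let k ≥ 1, let Y ⊆ ℤ^k be a finite nonempty set of objective vectors with nonnegative components, let r ∈ ℤ^k be a feasible reference point, let α ≥ 1, and let Y_α ⊆ Y be an α-approximate Pareto set. Then for every monotone norm N on ℝ^k, min_{y∈Y_α} (N(r) + N(y − r)) ≤ α · min_{y∈Y} (N(r) + N(y − r)). -/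
lemma norm_nonneg_aux (k : ℕ) (N : (Fin k → ℝ) → ℝ)
    (hN_add : ∀ a b, N (a + b) ≤ N a + N b)
    (hN_smul : ∀ (c : ℝ) (a : Fin k → ℝ), N (c • a) = |c| * N a)
    (a : Fin k → ℝ) : 0 ≤ N a := by
  have h0 : N 0 = 0 := by
    have := hN_smul 0 0
    simpa using this
  have hneg : N (-a) = N a := by
    have := hN_smul (-1) a
    simpa using this
  have := hN_add a (-a)
  simp [h0] at this
  linarith [this, hneg]

/-- If `Y_α` is an `α`-approximate Pareto set of `Y` and `r` is a feasible
reference point, then for every monotone norm `N` on `ℝ^k`,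
`min_{y ∈ Y_α} (N(r) + N(y − r)) ≤ α · min_{y ∈ Y} (N(r) + N(y − r))`.
(The minima are expressed by exhibiting `y' ∈ Y_α` beating `α` times the value of every
`y ∈ Y`.) -/
theorem approx_pareto_gives_approx_reference_point
    (k : ℕ) (hk : 1 ≤ k)
    (Y : Finset (Fin k → ℤ)) (hYne : Y.Nonempty)
    (hYpos : ∀ y ∈ Y, ∀ i, (0 : ℤ) ≤ y i)
    (r : Fin k → ℤ) (hr0 : ∀ i, 0 ≤ r i)
    (hrfeas : ∀ y ∈ Y, ∀ i, r i ≤ y i)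
    (α : ℝ) (hα : 1 ≤ α)
    (Yα : Finset (Fin k → ℤ)) (hsub : Yα ⊆ Y)
    (happrox : ∀ y ∈ Y, (¬ ∃ y' ∈ Y, y' ≠ y ∧ ∀ i, y' i ≤ y i) →
      ∃ y' ∈ Yα, ∀ i, (y' i : ℝ) ≤ α * (y i : ℝ))
    (N : (Fin k → ℝ) → ℝ)
    (hN_add : ∀ a b, N (a + b) ≤ N a + N b)
    (hN_smul : ∀ (c : ℝ) (a : Fin k → ℝ), N (c • a) = |c| * N a)
    (hN_zero : ∀ a, N a = 0 ↔ a = 0)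
    (hN_mono : ∀ a b : Fin k → ℝ, (∀ i, 0 ≤ a i) → (∀ i, a i ≤ b i) → N a ≤ N b) :
    ∃ y' ∈ Yα, ∀ y ∈ Y,
      N (fun i => (r i : ℝ)) + N (fun i => (y' i : ℝ) - (r i : ℝ)) ≤
      α * (N (fun i => (r i : ℝ)) + N (fun i => (y i : ℝ) - (r i : ℝ))) := by
  have hNnn := norm_nonneg_aux k N hN_add hN_smul
  set f : (Fin k → ℤ) → ℝ :=
    fun y => N (fun i => (r i : ℝ)) + N (fun i => (y i : ℝ) - (r i : ℝ)) with hf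
  -- minimizer of f
  obtain ⟨y0, hy0Y, hy0min⟩ := Y.exists_min_image f hYne
  -- Pareto optimal m dominating y0
  have hSne : (Y.filter (fun x => ∀ i, x i ≤ y0 i)).Nonempty :=
    ⟨y0, Finset.mem_filter.mpr ⟨hy0Y, fun i => le_refl _⟩⟩
  obtain ⟨m, hmS, hmmin⟩ : ∃ m ∈ Y.filter (fun x => ∀ i, x i ≤ y0 i),
      ∀ x ∈ Y.filter (fun x => ∀ i, x i ≤ y0 i), ¬ x < m := by
    obtain ⟨m, hm⟩ := Finset.exists_minimal hSne
    exact ⟨m, hm.1, fun x hx hlt => lt_irrefl _ (lt_of_lt_of_le hlt (show m ≤ x from hm.2 hx hlt.le))⟩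
  obtain ⟨hmY, hmle⟩ := Finset.mem_filter.mp hmS
  have hmPareto : ¬ ∃ y' ∈ Y, y' ≠ m ∧ ∀ i, y' i ≤ m i := by
    rintro ⟨y', hy'Y, hne, hle⟩
    have hy'S : y' ∈ Y.filter (fun x => ∀ i, x i ≤ y0 i) :=
      Finset.mem_filter.mpr ⟨hy'Y, fun i => (hle i).trans (hmle i)⟩
    exact hmmin y' hy'S (lt_of_le_of_ne (fun i => hle i) hne)
  obtain ⟨y', hy'Yα, hy'le⟩ := happrox m hmY hmPareto
  refine ⟨y', hy'Yα, fun y hyY => ?_⟩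
  -- f m ≤ f y0 ≤ f y
  have hfm : f m ≤ f y := by
    have h1 : N (fun i => (m i : ℝ) - (r i : ℝ)) ≤ N (fun i => (y0 i : ℝ) - (r i : ℝ)) := by
      apply hN_mono
      · intro i
        have h := hrfeas m hmY i
        have h2 : ((r i : ℝ)) ≤ (m i : ℝ) := by exact_mod_cast h
        simpa using sub_nonneg.mpr h2
      · intro i
        have h3 : ((m i : ℝ)) ≤ (y0 i : ℝ) := by exact_mod_cast hmle i
        show (m i : ℝ) - (r i : ℝ) ≤ (y0 i : ℝ) - (r i : ℝ)
        linarith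
    have h2 : f y0 ≤ f y := hy0min y hyY
    simp only [hf] at h2 ⊢
    linarith
  -- f y' ≤ α * f m
  have key : f y' ≤ α * f m := by
    have hdecomp : (fun i => (y' i : ℝ) - (r i : ℝ)) ≤
        (fun i => α * ((m i : ℝ) - (r i : ℝ))) + (fun i => (α - 1) * (r i : ℝ)) := by
      intro i
      simp only [Pi.add_apply]
      have := hy'le i
      ring_nf
      nlinarith [hy'le i]
    have hnn : ∀ i, (0:ℝ) ≤ (y' i : ℝ) - (r i : ℝ) := by
      intro i
      have := hrfeas y' (hsub hy'Yα) i
      have : ((r i : ℝ)) ≤ (y' i : ℝ) := by exact_mod_cast this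
      linarith
    have step1 : N (fun i => (y' i : ℝ) - (r i : ℝ)) ≤
        N ((fun i => α * ((m i : ℝ) - (r i : ℝ))) + (fun i => (α - 1) * (r i : ℝ))) :=
      hN_mono _ _ hnn hdecomp
    have step2 : N ((fun i => α * ((m i : ℝ) - (r i : ℝ))) + (fun i => (α - 1) * (r i : ℝ))) ≤
        α * N (fun i => (m i : ℝ) - (r i : ℝ)) + (α - 1) * N (fun i => (r i : ℝ)) := by
      have h1 := hN_add (fun i => α * ((m i : ℝ) - (r i : ℝ))) (fun i => (α - 1) * (r i : ℝ))
      have h2 : N (fun i => α * ((m i : ℝ) - (r i : ℝ))) =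
          α * N (fun i => (m i : ℝ) - (r i : ℝ)) := by
        have := hN_smul α (fun i => (m i : ℝ) - (r i : ℝ))
        rw [abs_of_nonneg (by linarith)] at this
        convert this using 2
        ext i; simp
      have h3 : N (fun i => (α - 1) * (r i : ℝ)) = (α - 1) * N (fun i => (r i : ℝ)) := by
        have := hN_smul (α - 1) (fun i => (r i : ℝ))
        rw [abs_of_nonneg (by linarith)] at this
        convert this using 2
        ext i; simp
      rw [h2, h3] at h1
      exact h1
    simp only [hf]
    have := step1.trans step2
    linarith
  calc f y' ≤ α * f m := key
    _ ≤ α * f y := by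
        apply mul_le_mul_of_nonneg_left hfm (by linarith)
end

section
/- Let k ≥ 1, let Y ⊆ ℤ^k be a finite nonempty set of objective vectors with nonnegative components and ideal point y^id (y^id_i = min_{y∈Y} y_i), let α ≥ 1, and let Y_α ⊆ Y be an α-approximate Pareto set. Define the reference point r ∈ ℤ^k by r_i := ⌈(1/α)·min_{y∈Y_α} y_i⌉. Then r is feasible and satisfies r ≤ y^id ≤ α·r componentwise, and for every monotone norm N on ℝ^k, if y' ∈ Y_α minimizes N(r) + N(y − r) over Y_α, then N(y^id) + N(y' − y^id) ≤ α² · (N(y^id) + N(y − y^id)) for every y ∈ Y. -/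
/-- Every point of a finite set is dominated by a Pareto optimal point. -/
private lemma exists_pareto_aux {k : ℕ} (Y : Finset (Fin k → ℤ)) :
    ∀ n : ℕ, ∀ y ∈ Y, (Y.filter fun z => ∀ i, z i ≤ y i).card ≤ n →
      ∃ p ∈ Y, (∀ i, p i ≤ y i) ∧ ¬ ∃ q ∈ Y, q ≠ p ∧ ∀ i, q i ≤ p i := by
  intro n
  induction n with
  | zero =>
    intro y hy h0
    exfalso
    have hmem : y ∈ Y.filter fun z => ∀ i, z i ≤ y i :=
      Finset.mem_filter.2 ⟨hy, fun i => le_rfl⟩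
    have hpos := Finset.card_pos.2 ⟨y, hmem⟩
    exact Nat.lt_irrefl 0 (lt_of_lt_of_le hpos h0)
  | succ n ih =>
    intro y hy hcard
    by_cases hpar : ∃ q ∈ Y, q ≠ y ∧ ∀ i, q i ≤ y i
    · obtain ⟨q, hqY, hqne, hqle⟩ := hpar
      have hss : (Y.filter fun z => ∀ i, z i ≤ q i) ⊂ Y.filter fun z => ∀ i, z i ≤ y i := by
        rw [Finset.ssubset_def]
        constructor
        · intro z hz
          rw [Finset.mem_filter] at hz ⊢
          exact ⟨hz.1, fun i => (hz.2 i).trans (hqle i)⟩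
        · intro hsup
          have hyq := hsup (Finset.mem_filter.2 ⟨hy, fun i => le_rfl⟩)
          rw [Finset.mem_filter] at hyq
          exact hqne (funext fun i => le_antisymm (hqle i) (hyq.2 i))
      have hlt := Finset.card_lt_card hss
      obtain ⟨p, hpY, hple, hpPar⟩ := ih q hqY (Nat.lt_succ_iff.1 (lt_of_lt_of_le hlt hcard))
      exact ⟨p, hpY, fun i => (hple i).trans (hqle i), hpPar⟩
    · exact ⟨y, hy, fun i => le_rfl, hpar⟩

/-- From an `α`-approximate Pareto set `Y_α` one obtains, via
`r_i := ⌈(1/α)·min_{y ∈ Y_α} y_i⌉`, a feasible reference point with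
`r ≤ y^id ≤ α·r`, and any minimizer `y'` over `Y_α` of the reference point objective for `r`
is an `α²`-approximate compromise solution, for every monotone norm `N`. -/
theorem approx_pareto_gives_approx_compromise
    (k : ℕ) (hk : 1 ≤ k)
    (Y : Finset (Fin k → ℤ)) (hYne : Y.Nonempty)
    (hYpos : ∀ y ∈ Y, ∀ i, (0 : ℤ) ≤ y i)
    (yid : Fin k → ℤ)
    (hyid_lb : ∀ y ∈ Y, ∀ i, yid i ≤ y i)
    (hyid_mem : ∀ i, ∃ y ∈ Y, y i = yid i)
    (α : ℝ) (hα : 1 ≤ α)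
    (Yα : Finset (Fin k → ℤ)) (hsub : Yα ⊆ Y) (hYαne : Yα.Nonempty)
    (happrox : ∀ y ∈ Y, (¬ ∃ y' ∈ Y, y' ≠ y ∧ ∀ i, y' i ≤ y i) →
      ∃ y' ∈ Yα, ∀ i, (y' i : ℝ) ≤ α * (y i : ℝ))
    (r : Fin k → ℤ)
    (hrdef : ∀ i, r i = ⌈α⁻¹ * ((Yα.inf' hYαne fun y => y i : ℤ) : ℝ)⌉)
    (N : (Fin k → ℝ) → ℝ)
    (hN_add : ∀ a b, N (a + b) ≤ N a + N b)
    (hN_smul : ∀ (c : ℝ) (a : Fin k → ℝ), N (c • a) = |c| * N a)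
    (hN_zero : ∀ a, N a = 0 ↔ a = 0)
    (hN_mono : ∀ a b : Fin k → ℝ, (∀ i, 0 ≤ a i) → (∀ i, a i ≤ b i) → N a ≤ N b) :
    (∀ i, 0 ≤ r i) ∧ (∀ y ∈ Y, ∀ i, r i ≤ y i) ∧
    (∀ i, r i ≤ yid i) ∧ (∀ i, (yid i : ℝ) ≤ α * (r i : ℝ)) ∧
    (∀ y' ∈ Yα,
      (∀ z ∈ Yα,
        N (fun i => (r i : ℝ)) + N (fun i => (y' i : ℝ) - (r i : ℝ)) ≤
        N (fun i => (r i : ℝ)) + N (fun i => (z i : ℝ) - (r i : ℝ))) →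
      ∀ y ∈ Y,
        N (fun i => (yid i : ℝ)) + N (fun i => (y' i : ℝ) - (yid i : ℝ)) ≤
        α ^ 2 * (N (fun i => (yid i : ℝ)) + N (fun i => (y i : ℝ) - (yid i : ℝ)))) := by
  have hα0 : (0 : ℝ) < α := lt_of_lt_of_le one_pos hα
  have hαinv_le : α⁻¹ ≤ 1 := by
    rw [inv_le_one_iff₀]; right; exact hα
  have hαinv_pos : (0 : ℝ) < α⁻¹ := inv_pos.2 hα0
  -- facts about the componentwise minimum over Yα
  have hm_le_mem : ∀ z ∈ Yα, ∀ i, (Yα.inf' hYαne fun y => y i) ≤ z i :=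
    fun z hz i => Finset.inf'_le _ hz
  have hyid_le_m : ∀ i, yid i ≤ Yα.inf' hYαne fun y => y i := by
    intro i
    obtain ⟨z, hz, hze⟩ := Finset.exists_mem_eq_inf' hYαne (fun y => y i)
    rw [hze]
    exact hyid_lb z (hsub hz) i
  have hyid_nn : ∀ i, (0 : ℤ) ≤ yid i := by
    intro i
    obtain ⟨y, hy, hyi⟩ := hyid_mem i
    rw [← hyi]; exact hYpos y hy i
  have hm_nn : ∀ i, (0 : ℤ) ≤ Yα.inf' hYαne fun y => y i :=
    fun i => (hyid_nn i).trans (hyid_le_m i)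
  -- key approximation fact through Pareto points
  have key : ∀ y ∈ Y, ∃ z ∈ Yα, ∀ i, (z i : ℝ) ≤ α * (y i : ℝ) := by
    intro y hy
    obtain ⟨p, hpY, hple, hppar⟩ := exists_pareto_aux Y _ y hy le_rfl
    obtain ⟨z, hz, hzle⟩ := happrox p hpY hppar
    refine ⟨z, hz, fun i => (hzle i).trans ?_⟩
    exact mul_le_mul_of_nonneg_left (Int.cast_le.2 (hple i)) hα0.le
  have hm_le_alpha : ∀ i, ((Yα.inf' hYαne fun y => y i : ℤ) : ℝ) ≤ α * (yid i : ℝ) := by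
    intro i
    obtain ⟨y, hy, hyi⟩ := hyid_mem i
    obtain ⟨z, hz, hzle⟩ := key y hy
    calc ((Yα.inf' hYαne fun y => y i : ℤ) : ℝ) ≤ (z i : ℝ) :=
          Int.cast_le.2 (hm_le_mem z hz i)
      _ ≤ α * (y i : ℝ) := hzle i
      _ = α * (yid i : ℝ) := by rw [hyi]
  -- properties of r
  have hr_nonneg : ∀ i, 0 ≤ r i := by
    intro i
    rw [hrdef i]
    exact Int.ceil_nonneg (mul_nonneg hαinv_pos.le (by exact_mod_cast hm_nn i))
  have hr_le_yid : ∀ i, r i ≤ yid i := by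
    intro i
    rw [hrdef i, Int.ceil_le]
    have h1 := mul_le_mul_of_nonneg_left (hm_le_alpha i) hαinv_pos.le
    rw [← mul_assoc, inv_mul_cancel₀ hα0.ne', one_mul] at h1
    exact h1
  have hr_ge : ∀ i, α⁻¹ * (yid i : ℝ) ≤ (r i : ℝ) := by
    intro i
    rw [hrdef i]
    calc α⁻¹ * (yid i : ℝ) ≤ α⁻¹ * ((Yα.inf' hYαne fun y => y i : ℤ) : ℝ) := by
          apply mul_le_mul_of_nonneg_left _ hαinv_pos.le
          exact_mod_cast hyid_le_m i
      _ ≤ _ := Int.le_ceil _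
  have hyid_le_ar : ∀ i, (yid i : ℝ) ≤ α * (r i : ℝ) := by
    intro i
    have h1 := mul_le_mul_of_nonneg_left (hr_ge i) hα0.le
    rw [← mul_assoc, mul_inv_cancel₀ hα0.ne', one_mul] at h1
    exact h1
  -- norm facts
  have hN0 : N 0 = 0 := (hN_zero 0).2 rfl
  have hNnn : ∀ a, 0 ≤ N a := by
    intro a
    have h := hN_add a ((-1 : ℝ) • a)
    have he : a + (-1 : ℝ) • a = 0 := by funext i; simp
    rw [he, hN0, hN_smul] at h
    simp only [abs_neg, abs_one, one_mul] at h
    linarith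
  refine ⟨hr_nonneg, fun y hy i => (hr_le_yid i).trans (hyid_lb y hy i), hr_le_yid,
    hyid_le_ar, ?_⟩
  intro y' hy' hmin y hy
  obtain ⟨z, hz, hzle⟩ := key y hy
  have hAnn : 0 ≤ N (fun i => (yid i : ℝ)) := hNnn _
  have hBnn : 0 ≤ N (fun i => (y i : ℝ) - (yid i : ℝ)) := hNnn _
  have h1 : N (fun i => (y' i : ℝ) - (yid i : ℝ)) ≤ N (fun i => (y' i : ℝ) - (r i : ℝ)) := by
    apply hN_mono
    · intro i
      have := hyid_lb y' (hsub hy') i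
      have : (yid i : ℝ) ≤ (y' i : ℝ) := Int.cast_le.2 this
      linarith
    · intro i
      have : (r i : ℝ) ≤ (yid i : ℝ) := Int.cast_le.2 (hr_le_yid i)
      linarith
  have h2 : N (fun i => (y' i : ℝ) - (r i : ℝ)) ≤ N (fun i => (z i : ℝ) - (r i : ℝ)) :=
    le_of_add_le_add_left (hmin z hz)
  have h3 : N (fun i => (z i : ℝ) - (r i : ℝ)) ≤ N (fun i => α * (y i : ℝ) - (r i : ℝ)) := by
    apply hN_mono
    · intro i
      have hzY : (yid i : ℝ) ≤ (z i : ℝ) := Int.cast_le.2 (hyid_lb z (hsub hz) i)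
      have hr' : (r i : ℝ) ≤ (yid i : ℝ) := Int.cast_le.2 (hr_le_yid i)
      linarith
    · intro i
      have := hzle i
      linarith
  have hdecomp : (fun i => α * (y i : ℝ) - (r i : ℝ)) =
      (α • fun i => (y i : ℝ) - (yid i : ℝ)) + (fun i => α * (yid i : ℝ) - (r i : ℝ)) := by
    funext i
    simp only [Pi.add_apply, Pi.smul_apply, smul_eq_mul]
    ring
  have h4 : N (fun i => α * (y i : ℝ) - (r i : ℝ)) ≤
      α * N (fun i => (y i : ℝ) - (yid i : ℝ)) + N (fun i => α * (yid i : ℝ) - (r i : ℝ)) := by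
    rw [hdecomp]
    refine (hN_add _ _).trans ?_
    rw [hN_smul, abs_of_pos hα0]
  have h5 : N (fun i => α * (yid i : ℝ) - (r i : ℝ)) ≤ (α - α⁻¹) * N (fun i => (yid i : ℝ)) := by
    have he : (fun i => (α - α⁻¹) * (yid i : ℝ)) = (α - α⁻¹) • fun i => (yid i : ℝ) := by
      funext i; simp [smul_eq_mul]
    have heq : N (fun i => (α - α⁻¹) * (yid i : ℝ)) = (α - α⁻¹) * N (fun i => (yid i : ℝ)) := by
      rw [he, hN_smul, abs_of_nonneg (by linarith)]
    refine le_of_le_of_eq (hN_mono _ _ ?_ ?_) heq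
    · intro i
      have hr' : (r i : ℝ) ≤ (yid i : ℝ) := Int.cast_le.2 (hr_le_yid i)
      have hynn : (0 : ℝ) ≤ (yid i : ℝ) := by exact_mod_cast hyid_nn i
      nlinarith
    · intro i
      have := hr_ge i
      linarith
  have hinv : α * α⁻¹ = 1 := mul_inv_cancel₀ hα0.ne'
  nlinarith [hNnn (fun i => (y' i : ℝ) - (yid i : ℝ)), sq_nonneg (α - 1),
    mul_nonneg (mul_nonneg (sq_nonneg (α - 1)) (by linarith : (0:ℝ) ≤ α + 1)) hAnn,
    mul_nonneg (mul_nonneg hα0.le hα0.le) hBnn, mul_pos hα0 hα0]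
end

section
/- Let k ≥ 1, let Y ⊆ ℤ^k be a finite nonempty set of objective vectors with nonnegative components, let r ∈ ℤ^k be a feasible reference point, let α > 1, and let y ∈ ℚ^k with nonnegative components satisfy y_i ≥ α·r_i for all i. Define weights λ by λ_i := 1/(y_i − r_i) if y_i > r_i, and λ_i := 2 if y_i = r_i = 0, and set rob(z) := ‖r‖_∞^λ + ‖z − r‖_∞^λ. If y' ∈ Y satisfies rob(y') ≤ rob(y), then y'_i ≤ y_i for all i ∈ [k]. -/
/-- In the Gap reduction (Lemma `ref-to-pareto`), with weights
`λ_i = 1/(y_i − r_i)` if `y_i > r_i` and `λ_i = 2` if `y_i = r_i = 0`, and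
`rob(z) = ‖r‖_∞^λ + ‖z − r‖_∞^λ`, any `y' ∈ Y` with `rob(y') ≤ rob(y)` satisfies
`y' ≤ y` componentwise. -/
theorem ref_point_gap_positive_answer
    (k : ℕ) (hk : 1 ≤ k)
    (Y : Finset (Fin k → ℤ)) (hYne : Y.Nonempty)
    (hYpos : ∀ y ∈ Y, ∀ i, (0 : ℤ) ≤ y i)
    (r : Fin k → ℤ) (hr0 : ∀ i, 0 ≤ r i)
    (hrfeas : ∀ y ∈ Y, ∀ i, r i ≤ y i)
    (α : ℝ) (hα : 1 < α)
    (y : Fin k → ℚ) (hy0 : ∀ i, 0 ≤ y i)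
    (hyr : ∀ i, α * (r i : ℝ) ≤ (y i : ℝ))
    (lam : Fin k → ℚ)
    (hlam : ∀ i, lam i = if (r i : ℚ) < y i then (y i - (r i : ℚ))⁻¹ else 2)
    (rob : (Fin k → ℝ) → ℝ)
    (hrob : ∀ z, rob z =
      (⨆ i, (lam i : ℝ) * |(r i : ℝ)|) + ⨆ i, (lam i : ℝ) * |z i - (r i : ℝ)|)
    (y' : Fin k → ℤ) (hy' : y' ∈ Y)
    (hle : rob (fun i => (y' i : ℝ)) ≤ rob (fun i => (y i : ℝ))) :
    ∀ i, (y' i : ℚ) ≤ y i := by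
  have hne : Nonempty (Fin k) := ⟨⟨0, hk⟩⟩
  -- In the degenerate case r i = y i, both are 0
  have hdeg : ∀ i, ¬ ((r i : ℚ) < y i) → r i = 0 ∧ y i = 0 := by
    intro i h
    have h1 : (y i : ℝ) ≤ (r i : ℝ) := by exact_mod_cast not_lt.1 h
    have h2 := hyr i
    have h3 : (0 : ℝ) ≤ (r i : ℝ) := by exact_mod_cast hr0 i
    have hr : (r i : ℝ) ≤ 0 := by nlinarith
    have hr' : r i = 0 := le_antisymm (by exact_mod_cast hr) (hr0 i)
    refine ⟨hr', ?_⟩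
    have : y i ≤ (r i : ℚ) := by exact_mod_cast h1
    rw [hr'] at this
    exact le_antisymm (by exact_mod_cast this) (hy0 i)
  -- the sup for y is ≤ 1
  have hS : (⨆ j, (lam j : ℝ) * |(y j : ℝ) - (r j : ℝ)|) ≤ 1 := by
    apply ciSup_le
    intro j
    by_cases h : (r j : ℚ) < y j
    · have hlj : lam j = (y j - (r j : ℚ))⁻¹ := by rw [hlam j, if_pos h]
      have hpos : (0 : ℚ) < y j - r j := by linarith
      have habs : |(y j : ℝ) - (r j : ℝ)| = ((y j - (r j : ℚ) : ℚ) : ℝ) := by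
        rw [abs_of_nonneg]
        · push_cast; ring
        · have : (r j : ℝ) ≤ (y j : ℝ) := by exact_mod_cast h.le
          linarith
      rw [hlj, habs]
      rw [show ((((y j - (r j : ℚ))⁻¹ : ℚ)) : ℝ) = (((y j - (r j : ℚ) : ℚ)) : ℝ)⁻¹ by push_cast; ring]
      rw [inv_mul_cancel₀ (by exact_mod_cast hpos.ne')]
    · obtain ⟨h1, h2⟩ := hdeg j h
      simp [h1, h2]
  -- extract sup inequality from hle
  have hS' : (⨆ j, (lam j : ℝ) * |((y' j : ℝ)) - (r j : ℝ)|) ≤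
      ⨆ j, (lam j : ℝ) * |(y j : ℝ) - (r j : ℝ)| := by
    have := hle
    rw [hrob, hrob] at this
    linarith
  intro i
  have hterm : (lam i : ℝ) * |((y' i : ℝ)) - (r i : ℝ)| ≤ 1 := by
    have h1 : (lam i : ℝ) * |((y' i : ℝ)) - (r i : ℝ)| ≤
        ⨆ j, (lam j : ℝ) * |((y' j : ℝ)) - (r j : ℝ)| :=
      le_ciSup (f := fun j => (lam j : ℝ) * |((y' j : ℝ)) - (r j : ℝ)|)
        (Set.Finite.bddAbove (Set.finite_range _)) i
    linarith
  have hry' : (r i : ℝ) ≤ (y' i : ℝ) := by exact_mod_cast hrfeas y' hy' i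
  have habs' : |((y' i : ℝ)) - (r i : ℝ)| = (y' i : ℝ) - (r i : ℝ) :=
    abs_of_nonneg (by linarith)
  rw [habs'] at hterm
  by_cases h : (r i : ℚ) < y i
  · have hlj : lam i = (y i - (r i : ℚ))⁻¹ := by rw [hlam i, if_pos h]
    have hpos : (0 : ℝ) < ((y i : ℝ) - (r i : ℝ)) := by
      have : (r i : ℝ) < (y i : ℝ) := by exact_mod_cast h
      linarith
    rw [hlj] at hterm
    have hcast : (((y i - (r i : ℚ))⁻¹ : ℚ) : ℝ) = ((y i : ℝ) - (r i : ℝ))⁻¹ := by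
      push_cast; ring
    rw [hcast] at hterm
    have := (inv_mul_le_iff₀ hpos).1 hterm
    have hfin : (y' i : ℝ) ≤ (y i : ℝ) := by linarith
    exact_mod_cast hfin
  · obtain ⟨h1, h2⟩ := hdeg i h
    have hlj : lam i = 2 := by rw [hlam i, if_neg h]
    rw [hlj, h1] at hterm
    push_cast at hterm
    have : (y' i : ℝ) < 1 := by linarith
    have hz : y' i ≤ 0 := by
      have : y' i < 1 := by exact_mod_cast this
      omega
    rw [h2]
    exact_mod_cast hz
end

section
/- Let k ≥ 1, let Y ⊆ ℤ^k be a finite nonempty set of objective vectors with nonnegative components, let r ∈ ℤ^k be a feasible reference point, let α > 1, set β := α²/(2α−1), and let y ∈ ℚ^k with nonnegative components satisfy y_i ≥ α·r_i for all i. Define weights λ by λ_i := 1/(y_i − r_i) if y_i > r_i, and λ_i := 2 if y_i = r_i = 0, and set rob(z) := ‖r‖_∞^λ + ‖z − r‖_∞^λ. Suppose y' ∈ Y satisfies rob(y') ≤ β·rob(z) for all z ∈ Y, and rob(y') > rob(y). Then for every y'' ∈ Y there exists an index i ∈ [k] with y''_i > (1/α)·y_i. -/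
/-- In the Gap reduction (Lemma `ref-to-pareto`), with `β = α²/(2α−1)`,
weights `λ_i = 1/(y_i − r_i)` if `y_i > r_i` and `λ_i = 2` if `y_i = r_i = 0`, and
`rob(z) = ‖r‖_∞^λ + ‖z − r‖_∞^λ`: if `y' ∈ Y` is a `β`-approximate minimizer of `rob`
over `Y` and `rob(y') > rob(y)`, then every `y'' ∈ Y` has some component with
`y''_i > (1/α)·y_i`, justifying the negative answer to the Gap problem. -/
theorem ref_point_gap_negative_answer
    (k : ℕ) (hk : 1 ≤ k)
    (Y : Finset (Fin k → ℤ)) (hYne : Y.Nonempty)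
    (hYpos : ∀ y ∈ Y, ∀ i, (0 : ℤ) ≤ y i)
    (r : Fin k → ℤ) (hr0 : ∀ i, 0 ≤ r i)
    (hrfeas : ∀ y ∈ Y, ∀ i, r i ≤ y i)
    (α : ℝ) (hα : 1 < α) (β : ℝ) (hβ : β = α ^ 2 / (2 * α - 1))
    (y : Fin k → ℚ) (hy0 : ∀ i, 0 ≤ y i)
    (hyr : ∀ i, α * (r i : ℝ) ≤ (y i : ℝ))
    (lam : Fin k → ℚ)
    (hlam : ∀ i, lam i = if (r i : ℚ) < y i then (y i - (r i : ℚ))⁻¹ else 2)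
    (rob : (Fin k → ℝ) → ℝ)
    (hrob : ∀ z, rob z =
      (⨆ i, (lam i : ℝ) * |(r i : ℝ)|) + ⨆ i, (lam i : ℝ) * |z i - (r i : ℝ)|)
    (y' : Fin k → ℤ) (hy' : y' ∈ Y)
    (happrox : ∀ z ∈ Y, rob (fun i => (y' i : ℝ)) ≤ β * rob (fun i => (z i : ℝ)))
    (hgt : rob (fun i => (y i : ℝ)) < rob (fun i => (y' i : ℝ))) :
    ∀ y'' ∈ Y, ∃ i, (1 / α) * (y i : ℝ) < (y'' i : ℝ) := by
  intro y'' hy''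
  by_contra hcon
  push_neg at hcon
  have hne : Nonempty (Fin k) := ⟨⟨0, hk⟩⟩
  have hα0 : (0 : ℝ) < α := lt_trans one_pos hα
  have hα1 : (0 : ℝ) < α - 1 := sub_pos.mpr hα
  have h2α : (0 : ℝ) < 2 * α - 1 := by linarith
  have hβpos : 0 < β := by
    rw [hβ]; positivity
  have hr0R : ∀ i, (0 : ℝ) ≤ (r i : ℝ) := fun i => by exact_mod_cast hr0 i
  have hryR : ∀ i, (r i : ℝ) ≤ (y i : ℝ) := by
    intro i
    have h1 := hyr i
    have h2 := hr0R i
    nlinarith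
  -- cast of lam
  have hlamR : ∀ i, ((lam i : ℝ)) =
      if (r i : ℝ) < (y i : ℝ) then ((y i : ℝ) - (r i : ℝ))⁻¹ else 2 := by
    intro i
    by_cases h : (r i : ℚ) < y i
    · rw [hlam i, if_pos h, if_pos (by exact_mod_cast h)]
      push_cast
      ring
    · rw [hlam i, if_neg h, if_neg (by exact_mod_cast h)]
      push_cast
      ring
  -- in the "else" case, r i = 0 and y i = r i
  have hzero : ∀ i, ¬ ((r i : ℝ) < (y i : ℝ)) → (r i : ℝ) = 0 ∧ (y i : ℝ) = 0 := by
    intro i h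
    have h1 : (y i : ℝ) ≤ (r i : ℝ) := le_of_not_gt h
    have h2 := hyr i
    have h3 := hr0R i
    constructor
    · nlinarith
    · nlinarith
  -- bounds on individual terms of R = sup lam i * |r i|
  have hRub : ∀ i, (lam i : ℝ) * |(r i : ℝ)| ≤ 1 / (α - 1) := by
    intro i
    rw [hlamR i, abs_of_nonneg (hr0R i)]
    by_cases h : (r i : ℝ) < (y i : ℝ)
    · rw [if_pos h]
      have hd : (0 : ℝ) < (y i : ℝ) - (r i : ℝ) := sub_pos.mpr h
      rw [inv_mul_eq_div, div_le_div_iff₀ hd hα1]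
      have := hyr i
      have := hr0R i
      nlinarith
    · rw [if_neg h, (hzero i h).1]
      have := one_div_pos.mpr hα1
      linarith
  have hRlb : ∀ i, (0 : ℝ) ≤ (lam i : ℝ) * |(r i : ℝ)| := by
    intro i
    apply mul_nonneg _ (abs_nonneg _)
    rw [hlamR i]
    by_cases h : (r i : ℝ) < (y i : ℝ)
    · rw [if_pos h]
      have hd : (0 : ℝ) < (y i : ℝ) - (r i : ℝ) := sub_pos.mpr h
      positivity
    · rw [if_neg h]; norm_num
  set R : ℝ := ⨆ i, (lam i : ℝ) * |(r i : ℝ)| with hRdef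
  have hR_ub : R ≤ 1 / (α - 1) := ciSup_le hRub
  have hR_lb : 0 ≤ R := by
    rw [hRdef]
    exact le_trans (hRlb ⟨0, hk⟩)
      (le_ciSup (Set.Finite.bddAbove (Set.finite_range fun i => (lam i : ℝ) * |(r i : ℝ)|))
        (⟨0, hk⟩ : Fin k))
  -- bound on sup for y''
  have hy''le : ∀ i, (y'' i : ℝ) * α ≤ (y i : ℝ) := by
    intro i
    have := hcon i
    rw [div_mul_eq_mul_div, le_div_iff₀ hα0] at this
    linarith
  have hS''ub : ∀ i, (lam i : ℝ) * |(y'' i : ℝ) - (r i : ℝ)| ≤ 1 / α := by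
    intro i
    have hrY : (r i : ℝ) ≤ (y'' i : ℝ) := by exact_mod_cast hrfeas y'' hy'' i
    rw [hlamR i, abs_of_nonneg (by linarith)]
    by_cases h : (r i : ℝ) < (y i : ℝ)
    · rw [if_pos h]
      have hd : (0 : ℝ) < (y i : ℝ) - (r i : ℝ) := sub_pos.mpr h
      rw [inv_mul_eq_div, div_le_div_iff₀ hd hα0]
      have h1 := hy''le i
      have h2 := hr0R i
      nlinarith
    · rw [if_neg h]
      obtain ⟨hr0', hy0'⟩ := hzero i h
      have h1 := hy''le i
      have h2 : (0 : ℝ) ≤ (y'' i : ℝ) := by exact_mod_cast hYpos y'' hy'' i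
      have h3 : (y'' i : ℝ) = 0 := by nlinarith
      rw [h3, hr0']
      have := one_div_pos.mpr hα0
      linarith
  have hS'' : (⨆ i, (lam i : ℝ) * |(y'' i : ℝ) - (r i : ℝ)|) ≤ 1 / α := ciSup_le hS''ub
  have hroby'' : rob (fun i => (y'' i : ℝ)) ≤ R + 1 / α := by
    rw [hrob]
    exact add_le_add le_rfl hS''
  have hchain1 : rob (fun i => (y' i : ℝ)) ≤ β * (R + 1 / α) := by
    calc rob (fun i => (y' i : ℝ)) ≤ β * rob (fun i => (y'' i : ℝ)) := happrox y'' hy''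
      _ ≤ β * (R + 1 / α) := by
          apply mul_le_mul_of_nonneg_left hroby'' (le_of_lt hβpos)
  by_cases hcase : ∃ i, (r i : ℝ) < (y i : ℝ)
  · obtain ⟨i₀, hi₀⟩ := hcase
    have hd : (0 : ℝ) < (y i₀ : ℝ) - (r i₀ : ℝ) := sub_pos.mpr hi₀
    have hterm : (lam i₀ : ℝ) * |(y i₀ : ℝ) - (r i₀ : ℝ)| = 1 := by
      rw [hlamR i₀, if_pos hi₀, abs_of_pos hd]
      field_simp
    have hSy : (1 : ℝ) ≤ ⨆ i, (lam i : ℝ) * |(y i : ℝ) - (r i : ℝ)| := by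
      rw [← hterm]
      exact le_ciSup
        (Set.Finite.bddAbove (Set.finite_range fun i => (lam i : ℝ) * |(y i : ℝ) - (r i : ℝ)|)) i₀
    have hroby : R + 1 ≤ rob (fun i => (y i : ℝ)) := by
      rw [hrob]
      exact add_le_add le_rfl hSy
    have hfinal : β * (R + 1 / α) ≤ R + 1 := by
      have hR1 : (α - 1) * R ≤ 1 := by
        rw [← le_div_iff₀' hα1]; exact hR_ub
      have hmul : (α - 1) * ((α - 1) * R) ≤ (α - 1) * 1 :=
        mul_le_mul_of_nonneg_left hR1 hα1.le
      rw [hβ, div_mul_eq_mul_div, div_le_iff₀ h2α]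
      have hexp : α ^ 2 * (R + 1 / α) = α ^ 2 * R + α := by
        field_simp
      rw [hexp]
      nlinarith [hmul]
    linarith
  · push_neg at hcase
    have hz : ∀ i, (r i : ℝ) = 0 ∧ (y i : ℝ) = 0 := fun i => hzero i (not_lt.mpr (hcase i))
    have hy''z : ∀ i, (y'' i : ℝ) = 0 := by
      intro i
      have h1 := hy''le i
      have h2 : (0 : ℝ) ≤ (y'' i : ℝ) := by exact_mod_cast hYpos y'' hy'' i
      have := (hz i).2
      nlinarith
    have hRz : R = 0 := by
      rw [hRdef]
      have : (fun i => (lam i : ℝ) * |(r i : ℝ)|) = fun _ => (0 : ℝ) := by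
        funext i; rw [(hz i).1]; simp
      rw [this, ciSup_const]
    have hroby''z : rob (fun i => (y'' i : ℝ)) = 0 := by
      rw [hrob]
      have e2 : (fun i => (lam i : ℝ) * |(y'' i : ℝ) - (r i : ℝ)|) = fun _ => (0 : ℝ) := by
        funext i; rw [(hz i).1, hy''z i]; simp
      rw [e2, ciSup_const, hRz, add_zero]
    have hrobyz : rob (fun i => (y i : ℝ)) = 0 := by
      rw [hrob]
      have e2 : (fun i => (lam i : ℝ) * |(y i : ℝ) - (r i : ℝ)|) = fun _ => (0 : ℝ) := by
        funext i; rw [(hz i).1, (hz i).2]; simp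
      rw [e2, ciSup_const, hRz, add_zero]
    have := happrox y'' hy''
    rw [hroby''z, mul_zero] at this
    rw [hrobyz] at hgt
    linarith
end

section
/- Let k ≥ 1, let Y ⊆ ℤ^k be a finite nonempty set of objective vectors with nonnegative components and ideal point y^id (y^id_i = min_{y∈Y} y_i), let β ≥ 1, and let r ∈ ℤ^k with nonnegative components satisfy r ≤ y^id ≤ β·r componentwise. Fix a weight vector λ ∈ ℚ^k with nonnegative components. If y' ∈ Y satisfies ‖y^id‖_∞^λ + ‖y' − y^id‖_∞^λ ≤ β·(‖y^id‖_∞^λ + ‖z − y^id‖_∞^λ) for all z ∈ Y, then ‖r‖_∞^λ + ‖y' − r‖_∞^λ ≤ β²·(‖r‖_∞^λ + ‖z − r‖_∞^λ) for all z ∈ Y. -/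
private lemma my_ciSup_le_add {α : Type*} [Nonempty α] [Finite α] (f g h : α → ℝ)
    (H : ∀ i, f i ≤ g i + h i) : (⨆ i, f i) ≤ (⨆ i, g i) + ⨆ i, h i :=
  ciSup_le fun i => (H i).trans (add_le_add
    (le_ciSup (Set.Finite.bddAbove (Set.finite_range g)) i)
    (le_ciSup (Set.Finite.bddAbove (Set.finite_range h)) i))

private lemma my_ciSup_le_mul {α : Type*} [Nonempty α] [Finite α] (c : ℝ) (hc : 0 ≤ c)
    (f g : α → ℝ) (H : ∀ i, f i ≤ c * g i) : (⨆ i, f i) ≤ c * ⨆ i, g i :=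
  ciSup_le fun i => (H i).trans
    (mul_le_mul_of_nonneg_left (le_ciSup (Set.Finite.bddAbove (Set.finite_range g)) i) hc)

/-- If `r ≤ y^id ≤ β·r` and `y' ∈ Y` is a `β`-approximate compromise solution
(w.r.t. the weighted infinity norm and ideal point `y^id`), then `y'` is a
`β²`-approximate reference point solution for the reference point `r`. -/
theorem approx_compromise_gives_approx_reference_point
    (k : ℕ) (hk : 1 ≤ k)
    (Y : Finset (Fin k → ℤ)) (hYne : Y.Nonempty)
    (hYpos : ∀ y ∈ Y, ∀ i, (0 : ℤ) ≤ y i)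
    (yid : Fin k → ℤ)
    (hyid_lb : ∀ y ∈ Y, ∀ i, yid i ≤ y i)
    (hyid_mem : ∀ i, ∃ y ∈ Y, y i = yid i)
    (β : ℝ) (hβ : 1 ≤ β)
    (r : Fin k → ℤ) (hr0 : ∀ i, 0 ≤ r i)
    (hr_le : ∀ i, r i ≤ yid i)
    (hr_ge : ∀ i, (yid i : ℝ) ≤ β * (r i : ℝ))
    (lam : Fin k → ℚ) (hlam0 : ∀ i, 0 ≤ lam i)
    (y' : Fin k → ℤ) (hy' : y' ∈ Y)
    (happrox : ∀ z ∈ Y,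
      (⨆ i, (lam i : ℝ) * |(yid i : ℝ)|) +
        (⨆ i, (lam i : ℝ) * |(y' i : ℝ) - (yid i : ℝ)|) ≤
      β * ((⨆ i, (lam i : ℝ) * |(yid i : ℝ)|) +
        ⨆ i, (lam i : ℝ) * |(z i : ℝ) - (yid i : ℝ)|)) :
    ∀ z ∈ Y,
      (⨆ i, (lam i : ℝ) * |(r i : ℝ)|) +
        (⨆ i, (lam i : ℝ) * |(y' i : ℝ) - (r i : ℝ)|) ≤
      β ^ 2 * ((⨆ i, (lam i : ℝ) * |(r i : ℝ)|) +
        ⨆ i, (lam i : ℝ) * |(z i : ℝ) - (r i : ℝ)|) := by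
  intro z hz
  haveI : Nonempty (Fin k) := ⟨⟨0, hk⟩⟩
  have hβ0 : (0 : ℝ) ≤ β := le_trans zero_le_one hβ
  have hlam : ∀ i, (0 : ℝ) ≤ (lam i : ℝ) := fun i => by exact_mod_cast hlam0 i
  have hr0' : ∀ i, (0 : ℝ) ≤ (r i : ℝ) := fun i => by exact_mod_cast hr0 i
  have hrle : ∀ i, (r i : ℝ) ≤ (yid i : ℝ) := fun i => by exact_mod_cast hr_le i
  have hyz : ∀ i, (yid i : ℝ) ≤ (z i : ℝ) := fun i => by exact_mod_cast hyid_lb z hz i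
  have hyy' : ∀ i, (yid i : ℝ) ≤ (y' i : ℝ) := fun i => by exact_mod_cast hyid_lb y' hy' i
  set A := ⨆ i, (lam i : ℝ) * |(r i : ℝ)| with hAdef
  set B := ⨆ i, (lam i : ℝ) * |(y' i : ℝ) - (r i : ℝ)| with hBdef
  set C := ⨆ i, (lam i : ℝ) * |(z i : ℝ) - (r i : ℝ)| with hCdef
  set I := ⨆ i, (lam i : ℝ) * |(yid i : ℝ)| with hIdef
  set D := ⨆ i, (lam i : ℝ) * |(y' i : ℝ) - (yid i : ℝ)| with hDdef
  set E := ⨆ i, (lam i : ℝ) * |(z i : ℝ) - (yid i : ℝ)| with hEdef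
  set G := ⨆ i, (lam i : ℝ) * |(yid i : ℝ) - (r i : ℝ)| with hGdef
  have h1 : I + D ≤ β * (I + E) := happrox z hz
  have h3 : I ≤ β * A := by
    apply my_ciSup_le_mul β hβ0
    intro i
    rw [abs_of_nonneg (hr0' i), abs_of_nonneg ((hr0' i).trans (hrle i))]
    nlinarith [hlam i, hr_ge i, hr0' i]
  have h4 : G ≤ (β - 1) * A := by
    apply my_ciSup_le_mul (β - 1) (by linarith)
    intro i
    rw [abs_of_nonneg (hr0' i), abs_of_nonneg (by linarith [hrle i] : (0:ℝ) ≤ (yid i : ℝ) - (r i : ℝ))]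
    nlinarith [hlam i, hr_ge i, hr0' i]
  have h5 : B ≤ D + G := by
    apply my_ciSup_le_add
    intro i
    calc (lam i : ℝ) * |(y' i : ℝ) - (r i : ℝ)|
        ≤ (lam i : ℝ) * (|(y' i : ℝ) - (yid i : ℝ)| + |(yid i : ℝ) - (r i : ℝ)|) :=
          mul_le_mul_of_nonneg_left (abs_sub_le _ _ _) (hlam i)
      _ = (lam i : ℝ) * |(y' i : ℝ) - (yid i : ℝ)| + (lam i : ℝ) * |(yid i : ℝ) - (r i : ℝ)| := by
          ring
  have h6 : E ≤ C := by
    apply ciSup_mono (Set.Finite.bddAbove (Set.finite_range _))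
    intro i
    apply mul_le_mul_of_nonneg_left _ (hlam i)
    apply abs_le_abs <;> nlinarith [hyz i, hrle i, hr0' i]
  have hC0 : 0 ≤ C := Real.iSup_nonneg fun i => mul_nonneg (hlam i) (abs_nonneg _)
  have hA0 : 0 ≤ A := Real.iSup_nonneg fun i => mul_nonneg (hlam i) (abs_nonneg _)
  linarith [h1, h3, h4, h5, h6, hC0, hA0, mul_le_mul_of_nonneg_left h6 hβ0,
    mul_le_mul_of_nonneg_left h3 (by linarith : (0:ℝ) ≤ β - 1),
    mul_nonneg hβ0 (mul_nonneg (by linarith : (0:ℝ) ≤ β - 1) hC0)]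
end

section
/- Let k ≥ 1, let Y ⊆ ℤ^k be a finite nonempty set of objective vectors with nonnegative components, let r ∈ ℤ^k be a feasible reference point, let λ ∈ ℚ^k have nonnegative components, and let α ≥ 1. If y' ∈ Y satisfies ∑_i λ_i y'_i ≤ α·∑_i λ_i z_i for all z ∈ Y (i.e., y' is an α-approximate minimizer of the weighted sum), then ‖r‖_∞^λ + ‖y' − r‖_∞^λ ≤ k·α·(‖r‖_∞^λ + ‖z − r‖_∞^λ) for all z ∈ Y. -/
/-- An `α`-approximate minimizer `y'` of the weighted sum `∑ λ_i z_i` over `Y`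
is a `k·α`-approximate reference point solution for the weighted infinity norm, for every
feasible reference point `r`. -/
theorem weighted_sum_gives_k_alpha_approx_reference_point
    (k : ℕ) (hk : 1 ≤ k)
    (Y : Finset (Fin k → ℤ)) (hYne : Y.Nonempty)
    (hYpos : ∀ y ∈ Y, ∀ i, (0 : ℤ) ≤ y i)
    (r : Fin k → ℤ) (hr0 : ∀ i, 0 ≤ r i)
    (hrfeas : ∀ y ∈ Y, ∀ i, r i ≤ y i)
    (lam : Fin k → ℚ) (hlam0 : ∀ i, 0 ≤ lam i)
    (α : ℝ) (hα : 1 ≤ α)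
    (y' : Fin k → ℤ) (hy' : y' ∈ Y)
    (happrox : ∀ z ∈ Y,
      (∑ i, (lam i : ℝ) * (y' i : ℝ)) ≤ α * ∑ i, (lam i : ℝ) * (z i : ℝ)) :
    ∀ z ∈ Y,
      (⨆ i, (lam i : ℝ) * |(r i : ℝ)|) +
        (⨆ i, (lam i : ℝ) * |(y' i : ℝ) - (r i : ℝ)|) ≤
      (k : ℝ) * α * ((⨆ i, (lam i : ℝ) * |(r i : ℝ)|) +
        ⨆ i, (lam i : ℝ) * |(z i : ℝ) - (r i : ℝ)|) := by
  intro z hz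
  have hne : Nonempty (Fin k) := ⟨⟨0, hk⟩⟩
  have hlamR : ∀ i, (0 : ℝ) ≤ (lam i : ℝ) := fun i => by exact_mod_cast hlam0 i
  have hrR : ∀ i, (0 : ℝ) ≤ (r i : ℝ) := fun i => by exact_mod_cast hr0 i
  have habsr : ∀ i, |(r i : ℝ)| = (r i : ℝ) := fun i => abs_of_nonneg (hrR i)
  have hfeas : ∀ y ∈ Y, ∀ i, ((r i : ℝ)) ≤ (y i : ℝ) := fun y hy i => by
    exact_mod_cast hrfeas y hy i
  -- step 1 : sup λ|r| ≤ ∑ λ r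
  have h1 : (⨆ i, (lam i : ℝ) * |(r i : ℝ)|) ≤ ∑ i, (lam i : ℝ) * (r i : ℝ) := by
    apply ciSup_le
    intro i
    rw [habsr i]
    exact Finset.single_le_sum (f := fun j => (lam j : ℝ) * (r j : ℝ))
      (fun j _ => mul_nonneg (hlamR j) (hrR j)) (Finset.mem_univ i)
  -- step 2 : sup λ|y'-r| ≤ ∑ λ (y'-r)
  have h2 : (⨆ i, (lam i : ℝ) * |(y' i : ℝ) - (r i : ℝ)|) ≤
      ∑ i, (lam i : ℝ) * ((y' i : ℝ) - (r i : ℝ)) := by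
    apply ciSup_le
    intro i
    rw [abs_of_nonneg (sub_nonneg.mpr (hfeas y' hy' i))]
    exact Finset.single_le_sum (f := fun j => (lam j : ℝ) * ((y' j : ℝ) - (r j : ℝ)))
      (fun j _ => mul_nonneg (hlamR j) (sub_nonneg.mpr (hfeas y' hy' j)))
      (Finset.mem_univ i)
  have hsum : (⨆ i, (lam i : ℝ) * |(r i : ℝ)|) +
      (⨆ i, (lam i : ℝ) * |(y' i : ℝ) - (r i : ℝ)|) ≤
      ∑ i, (lam i : ℝ) * (y' i : ℝ) := by
    calc _ ≤ (∑ i, (lam i : ℝ) * (r i : ℝ)) +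
        ∑ i, (lam i : ℝ) * ((y' i : ℝ) - (r i : ℝ)) := add_le_add h1 h2
      _ = ∑ i, (lam i : ℝ) * (y' i : ℝ) := by
          rw [← Finset.sum_add_distrib]; congr 1; ext i; ring
  -- step 3 : ∑ λ z ≤ k * (A + B_z)
  set A := (⨆ i, (lam i : ℝ) * |(r i : ℝ)|) with hA
  set B := (⨆ i, (lam i : ℝ) * |(z i : ℝ) - (r i : ℝ)|) with hB
  have hbdd1 : BddAbove (Set.range fun i => (lam i : ℝ) * |(r i : ℝ)|) :=
    Set.Finite.bddAbove (Set.finite_range _)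
  have hbdd2 : BddAbove (Set.range fun i => (lam i : ℝ) * |(z i : ℝ) - (r i : ℝ)|) :=
    Set.Finite.bddAbove (Set.finite_range _)
  have h3 : ∑ i, (lam i : ℝ) * (z i : ℝ) ≤ (k : ℝ) * (A + B) := by
    have hterm : ∀ i, (lam i : ℝ) * (z i : ℝ) ≤ A + B := by
      intro i
      have hA' : (lam i : ℝ) * (r i : ℝ) ≤ A := by
        have := le_ciSup hbdd1 i
        rwa [habsr i] at this
      have hB' : (lam i : ℝ) * ((z i : ℝ) - (r i : ℝ)) ≤ B := by
        have := le_ciSup hbdd2 i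
        rwa [abs_of_nonneg (sub_nonneg.mpr (hfeas z hz i))] at this
      calc (lam i : ℝ) * (z i : ℝ)
          = (lam i : ℝ) * (r i : ℝ) + (lam i : ℝ) * ((z i : ℝ) - (r i : ℝ)) := by ring
        _ ≤ A + B := add_le_add hA' hB'
    calc ∑ i, (lam i : ℝ) * (z i : ℝ) ≤ ∑ _i : Fin k, (A + B) :=
          Finset.sum_le_sum (fun i _ => hterm i)
      _ = (k : ℝ) * (A + B) := by simp [Finset.sum_const, nsmul_eq_mul]; ring
  calc A + (⨆ i, (lam i : ℝ) * |(y' i : ℝ) - (r i : ℝ)|)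
      ≤ ∑ i, (lam i : ℝ) * (y' i : ℝ) := hsum
    _ ≤ α * ∑ i, (lam i : ℝ) * (z i : ℝ) := happrox z hz
    _ ≤ α * ((k : ℝ) * (A + B)) := by
        apply mul_le_mul_of_nonneg_left h3 (le_trans zero_le_one hα)
    _ = (k : ℝ) * α * (A + B) := by ring
end

section
/- Let n, k ≥ 1, let X ⊆ ℝ^n be a nonempty set, let C ∈ ℚ^{k×n}, let p ≥ 1 be real, and let r ∈ ℝ^k with nonnegative components satisfy (Cx)_i ≥ r_i for all x ∈ X and all i ∈ [k]. Then inf_{x∈X} [⦀r⦀_p + ⦀Cx − r⦀_p] = max_{i∈[k]} r_i + inf { Δ + (1/p)·∑_{i∈[k]} (Cx)_i : x ∈ X, Δ ∈ ℝ, (Cx)_i − r_i ≤ Δ for all i ∈ [k] }; i.e., the reference point problem for the cornered p-norm is equivalent to a single-objective program with linear objective and linear additional constraints over X × ℝ. -/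
/-- Over a nonempty set `X ⊆ ℝ^n` with linear objectives `Cx` dominating a
nonnegative reference point `r`, the reference point problem for the cornered `p`-norm
equals the linear program `max_i r_i + inf {Δ + (1/p)·∑_i (Cx)_i : x ∈ X, Cx − r ≤ Δ·𝟙}`. -/
theorem convex_reference_point_as_linear_program
    (n k : ℕ) (hn : 1 ≤ n) (hk : 1 ≤ k)
    (X : Set (Fin n → ℝ)) (hXne : X.Nonempty)
    (C : Matrix (Fin k) (Fin n) ℚ)
    (p : ℝ) (hp : 1 ≤ p)
    (r : Fin k → ℝ) (hr0 : ∀ i, 0 ≤ r i)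
    (hfeas : ∀ x ∈ X, ∀ i, r i ≤ ∑ j, (C i j : ℝ) * x j) :
    sInf ((fun x : Fin n → ℝ =>
        ((⨆ i, |r i|) + (1 / p) * ∑ i, |r i|) +
        ((⨆ i, |(∑ j, (C i j : ℝ) * x j) - r i|) +
          (1 / p) * ∑ i, |(∑ j, (C i j : ℝ) * x j) - r i|)) '' X) =
    (⨆ i, r i) +
      sInf {v : ℝ | ∃ x ∈ X, ∃ Δ : ℝ,
        (∀ i, (∑ j, (C i j : ℝ) * x j) - r i ≤ Δ) ∧
        v = Δ + (1 / p) * ∑ i, ∑ j, (C i j : ℝ) * x j} := by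
  haveI : Nonempty (Fin k) := Fin.pos_iff_nonempty.mp hk
  have hp0 : 0 ≤ 1 / p := by positivity
  set c : ℝ := ⨆ i, r i with hc
  set g : (Fin n → ℝ) → ℝ := fun x =>
    (⨆ i, ((∑ j, (C i j : ℝ) * x j) - r i)) + (1 / p) * ∑ i, ∑ j, (C i j : ℝ) * x j
    with hg
  set S : Set ℝ := {v : ℝ | ∃ x ∈ X, ∃ Δ : ℝ,
        (∀ i, (∑ j, (C i j : ℝ) * x j) - r i ≤ Δ) ∧
        v = Δ + (1 / p) * ∑ i, ∑ j, (C i j : ℝ) * x j} with hS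
  -- nonnegativity of g on X
  have hgnn : ∀ x ∈ X, 0 ≤ g x := by
    intro x hx
    have h1 : (0:ℝ) ≤ ⨆ i, ((∑ j, (C i j : ℝ) * x j) - r i) := by
      refine le_trans (sub_nonneg.mpr (hfeas x hx (Classical.arbitrary _)))
        (le_ciSup (f := fun i => (∑ j, (C i j : ℝ) * x j) - r i)
          (Set.Finite.bddAbove (Set.finite_range _)) _)
    have h2 : (0:ℝ) ≤ ∑ i, ∑ j, (C i j : ℝ) * x j :=
      Finset.sum_nonneg fun i _ => le_trans (hr0 i) (hfeas x hx i)
    exact add_nonneg h1 (mul_nonneg hp0 h2)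
  have hSnn : ∀ v ∈ S, 0 ≤ v := by
    rintro v ⟨x, hx, Δ, hΔ, rfl⟩
    have h1 : (0:ℝ) ≤ Δ := le_trans
      (sub_nonneg.mpr (hfeas x hx (Classical.arbitrary _))) (hΔ _)
    have h2 : (0:ℝ) ≤ ∑ i, ∑ j, (C i j : ℝ) * x j :=
      Finset.sum_nonneg fun i _ => le_trans (hr0 i) (hfeas x hx i)
    exact add_nonneg h1 (mul_nonneg hp0 h2)
  have hbddS : BddBelow S := ⟨0, fun v hv => hSnn v hv⟩
  have hbddg : BddBelow (g '' X) := ⟨0, by rintro v ⟨x, hx, rfl⟩; exact hgnn x hx⟩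
  have hgXne : (g '' X).Nonempty := hXne.image g
  have hSne : S.Nonempty := by
    obtain ⟨x, hx⟩ := hXne
    exact ⟨g x, x, hx, ⨆ i, ((∑ j, (C i j : ℝ) * x j) - r i),
      fun i => le_ciSup (f := fun i => (∑ j, (C i j : ℝ) * x j) - r i)
        (Set.Finite.bddAbove (Set.finite_range _)) i, rfl⟩
  -- Step 1: the LHS function equals c + g on X
  have hfun : ∀ x ∈ X,
      ((⨆ i, |r i|) + (1 / p) * ∑ i, |r i|) +
        ((⨆ i, |(∑ j, (C i j : ℝ) * x j) - r i|) +
          (1 / p) * ∑ i, |(∑ j, (C i j : ℝ) * x j) - r i|) = c + g x := by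
    intro x hx
    have e1 : (⨆ i, |r i|) = c := by
      rw [hc]; exact iSup_congr fun i => abs_of_nonneg (hr0 i)
    have e2 : ∑ i, |r i| = ∑ i, r i :=
      Finset.sum_congr rfl fun i _ => abs_of_nonneg (hr0 i)
    have e3 : (⨆ i, |(∑ j, (C i j : ℝ) * x j) - r i|) =
        ⨆ i, ((∑ j, (C i j : ℝ) * x j) - r i) :=
      iSup_congr fun i => abs_of_nonneg (sub_nonneg.mpr (hfeas x hx i))
    have e4 : ∑ i, |(∑ j, (C i j : ℝ) * x j) - r i| =
        (∑ i, ∑ j, (C i j : ℝ) * x j) - ∑ i, r i := by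
      rw [← Finset.sum_sub_distrib]
      exact Finset.sum_congr rfl fun i _ => abs_of_nonneg (sub_nonneg.mpr (hfeas x hx i))
    rw [e1, e2, e3, e4, hg]
    ring
  -- Step 2: sInf S = sInf (g '' X)
  have hstep2 : sInf S = sInf (g '' X) := by
    apply le_antisymm
    · refine le_csInf hgXne ?_
      rintro v ⟨x, hx, rfl⟩
      exact csInf_le hbddS ⟨x, hx, ⨆ i, ((∑ j, (C i j : ℝ) * x j) - r i),
        fun i => le_ciSup (f := fun i => (∑ j, (C i j : ℝ) * x j) - r i)
        (Set.Finite.bddAbove (Set.finite_range _)) i, rfl⟩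
    · refine le_csInf hSne ?_
      rintro v ⟨x, hx, Δ, hΔ, rfl⟩
      refine le_trans (csInf_le hbddg ⟨x, hx, rfl⟩) ?_
      exact add_le_add_left (ciSup_le hΔ) _
  -- Step 3: image rewriting and translation
  have himg : (fun x : Fin n → ℝ =>
        ((⨆ i, |r i|) + (1 / p) * ∑ i, |r i|) +
        ((⨆ i, |(∑ j, (C i j : ℝ) * x j) - r i|) +
          (1 / p) * ∑ i, |(∑ j, (C i j : ℝ) * x j) - r i|)) '' X
      = (fun v => c + v) '' (g '' X) := by
    rw [Set.image_image]
    exact Set.image_congr hfun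
  rw [himg, hstep2]
  -- sInf ((c + ·) '' (g '' X)) = c + sInf (g '' X)
  have hbddimg : BddBelow ((fun v => c + v) '' (g '' X)) := by
    obtain ⟨b, hb⟩ := hbddg
    exact ⟨c + b, by rintro w ⟨v, hv, rfl⟩; exact add_le_add_right (hb hv) c⟩
  apply le_antisymm
  · have h1 : sInf ((fun v => c + v) '' (g '' X)) - c ≤ sInf (g '' X) := by
      refine le_csInf hgXne ?_
      intro v hv
      have := csInf_le hbddimg (Set.mem_image_of_mem _ hv)
      linarith
    linarith
  · refine le_csInf (hgXne.image _) ?_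
    rintro w ⟨v, hv, rfl⟩
    exact add_le_add_right (csInf_le hbddg hv) c
end

section
/- Let n, k ≥ 1, let X ⊆ ℤ^n be a nonempty set of integral solutions with nonnegative components, let X' ⊆ ℝ^n be a relaxation with X ⊆ X', let C ∈ ℚ^{k×n} have nonnegative entries, let p ≥ 1 be real, let α ≥ 1, and let r ∈ ℝ^k with nonnegative components satisfy (Cx')_i ≥ r_i for all x' ∈ X' and all i ∈ [k]. Suppose R : X' → X is a rounding map such that ∑_j c_j (R(x'))_j ≤ α·∑_j c_j x'_j for every c ∈ ℚ^n with nonnegative components and every x' ∈ X'. If x* ∈ X' minimizes rob(x) := ⦀r⦀_p + ⦀Cx − r⦀_p over X', then R(x*) ∈ X and rob(R(x*)) ≤ α·rob(x*) ≤ α·min_{x∈X} rob(x); in particular oblivious LP-rounding with factor α yields an α-approximation for the reference point problem in the cornered p-norm. -/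
lemma aux_cornered (k : ℕ) (hk : 1 ≤ k) (r a b : Fin k → ℝ) (p α : ℝ)
    (hp : 1 ≤ p) (hα : 1 ≤ α) (hr : ∀ i, 0 ≤ r i)
    (hra : ∀ i, r i ≤ a i) (hrb : ∀ i, r i ≤ b i) (hba : ∀ i, b i ≤ α * a i) :
    ((⨆ i, |r i|) + (1 / p) * ∑ i, |r i|) +
      ((⨆ i, |b i - r i|) + (1 / p) * ∑ i, |b i - r i|) ≤
    α * (((⨆ i, |r i|) + (1 / p) * ∑ i, |r i|) +
      ((⨆ i, |a i - r i|) + (1 / p) * ∑ i, |a i - r i|)) := by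
  haveI : Nonempty (Fin k) := ⟨⟨0, hk⟩⟩
  have habs_r : ∀ i, |r i| = r i := fun i => abs_of_nonneg (hr i)
  have habs_a : ∀ i, |a i - r i| = a i - r i := fun i => abs_of_nonneg (by linarith [hra i])
  have habs_b : ∀ i, |b i - r i| = b i - r i := fun i => abs_of_nonneg (by linarith [hrb i])
  simp_rw [habs_r, habs_a, habs_b]
  have hq : (0 : ℝ) ≤ 1 / p := by positivity
  have hα0 : (0 : ℝ) ≤ α := by linarith
  have hα1 : (0 : ℝ) ≤ α - 1 := by linarith
  have bddr : BddAbove (Set.range r) := Set.Finite.bddAbove (Set.finite_range r)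
  have bdda : BddAbove (Set.range fun i => a i - r i) := Set.Finite.bddAbove (Set.finite_range _)
  have hSb : (⨆ i, b i - r i) ≤ α * (⨆ i, a i - r i) + (α - 1) * (⨆ i, r i) := by
    apply ciSup_le
    intro i
    have h1 : a i - r i ≤ ⨆ i, a i - r i := le_ciSup bdda i
    have h2 : r i ≤ ⨆ i, r i := le_ciSup bddr i
    nlinarith [hba i]
  have hTb : (∑ i, (b i - r i)) ≤ α * (∑ i, (a i - r i)) + (α - 1) * (∑ i, r i) := by
    have h := Finset.sum_le_sum (fun i (_ : i ∈ Finset.univ) =>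
      (by nlinarith [hba i] : b i - r i ≤ α * (a i - r i) + (α - 1) * r i))
    rw [Finset.sum_add_distrib, ← Finset.mul_sum, ← Finset.mul_sum] at h
    exact h
  have hSr : (0 : ℝ) ≤ ⨆ i, r i :=
    le_trans (hr (Classical.arbitrary _)) (le_ciSup bddr _)
  have hTr : (0 : ℝ) ≤ ∑ i, r i := Finset.sum_nonneg fun i _ => hr i
  nlinarith [mul_le_mul_of_nonneg_left hTb hq, mul_nonneg hq hTr]

/-- Oblivious LP-rounding with factor `α` yields an `α`-approximation for the
reference point problem in the cornered `p`-norm: if `x*` minimizes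
`rob(x) = ⦀r⦀_p + ⦀Cx − r⦀_p` over the relaxation `X'`, then the rounded solution `R(x*)`
is feasible and satisfies `rob(R(x*)) ≤ α·rob(x*) ≤ α·min_{x ∈ X} rob(x)`. -/
theorem oblivious_lp_rounding_reference_point
    (n k : ℕ) (hn : 1 ≤ n) (hk : 1 ≤ k)
    (X : Set (Fin n → ℤ)) (hXne : X.Nonempty)
    (hXpos : ∀ x ∈ X, ∀ j, (0 : ℤ) ≤ x j)
    (X' : Set (Fin n → ℝ))
    (hXX' : ∀ x ∈ X, (fun j => (x j : ℝ)) ∈ X')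
    (C : Matrix (Fin k) (Fin n) ℚ) (hC0 : ∀ i j, 0 ≤ C i j)
    (p : ℝ) (hp : 1 ≤ p) (α : ℝ) (hα : 1 ≤ α)
    (r : Fin k → ℝ) (hr0 : ∀ i, 0 ≤ r i)
    (hfeas : ∀ x' ∈ X', ∀ i, r i ≤ ∑ j, (C i j : ℝ) * x' j)
    (R : (Fin n → ℝ) → (Fin n → ℤ))
    (hR_into : ∀ x' ∈ X', R x' ∈ X)
    (hR_approx : ∀ c : Fin n → ℚ, (∀ j, 0 ≤ c j) → ∀ x' ∈ X',
      (∑ j, (c j : ℝ) * ((R x') j : ℝ)) ≤ α * ∑ j, (c j : ℝ) * x' j)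
    (rob : (Fin n → ℝ) → ℝ)
    (hrob : ∀ x, rob x =
      ((⨆ i, |r i|) + (1 / p) * ∑ i, |r i|) +
      ((⨆ i, |(∑ j, (C i j : ℝ) * x j) - r i|) +
        (1 / p) * ∑ i, |(∑ j, (C i j : ℝ) * x j) - r i|))
    (xstar : Fin n → ℝ) (hxstar : xstar ∈ X')
    (hmin : ∀ x ∈ X', rob xstar ≤ rob x) :
    R xstar ∈ X ∧
    rob (fun j => ((R xstar) j : ℝ)) ≤ α * rob xstar ∧
    ∀ x ∈ X, α * rob xstar ≤ α * rob (fun j => (x j : ℝ)) := by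
  have hRX : R xstar ∈ X := hR_into xstar hxstar
  have hRX' : (fun j => ((R xstar) j : ℝ)) ∈ X' := hXX' _ hRX
  refine ⟨hRX, ?_, fun x hx =>
    mul_le_mul_of_nonneg_left (hmin _ (hXX' x hx)) (by linarith)⟩
  rw [hrob, hrob]
  exact aux_cornered k hk r
    (fun i => ∑ j, (C i j : ℝ) * xstar j)
    (fun i => ∑ j, (C i j : ℝ) * ((R xstar) j : ℝ))
    p α hp hα hr0 (hfeas xstar hxstar) (hfeas _ hRX')
    (fun i => hR_approx (C i) (fun j => hC0 i j) xstar hxstar)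
end

section
/- Let n, k ≥ 1, let X ⊆ {0,1}^n be a nonempty set of binary solutions, let C ∈ ℤ^{k×n} have nonnegative entries, let p ≥ 1 be real, and let r ∈ ℤ^k with nonnegative components satisfy (Cx)_i ≥ r_i for all x ∈ X and i ∈ [k] (a feasible reference point). Let ε > 0, set ε' := ε/(1 + k/p), let L > 0 satisfy L ≤ min_{x∈X} rob(x) where rob(x) := ⦀r⦀_p + ⦀Cx − r⦀_p, and set γ := 3n/(ε'L). Define the scaled instance by c̄_{ij} := ⌊γ·c_{ij}⌋ and r̄_i := ⌊γ·r_i⌋, with scaled objective rob̄(x) := ⦀r̄⦀_p + ⦀C̄x − r̄⦀_p. If x̄* minimizes rob̄ over X and x* minimizes rob over X, then rob(x̄*) ≤ rob(x*) + ε·L ≤ (1+ε)·rob(x*). -/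
private lemma aux_ciSup_le_add {k : ℕ} [Nonempty (Fin k)] {a b : Fin k → ℝ} {c : ℝ}
    (h : ∀ i, a i ≤ b i + c) : (⨆ i, a i) ≤ (⨆ i, b i) + c :=
  ciSup_le fun i => (h i).trans
    (add_le_add_left (le_ciSup (Set.Finite.bddAbove (Set.finite_range b)) i) c)

/-- Scaling step for the FPTAS from pseudopolynomial algorithms
(Theorem `aissi-ext`): for a binary problem with costs `C` and feasible reference point `r`,
round costs and the reference point down by the factor `γ = 3n/(ε'L)` with `ε' = ε/(1+k/p)`.
If `x̄*` minimizes the scaled reference point objective and `x*` the original one, then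
`rob(x̄*) ≤ rob(x*) + εL ≤ (1+ε)·rob(x*)`. -/
theorem scaling_fptas_reference_point
    (n k : ℕ) (hn : 1 ≤ n) (hk : 1 ≤ k)
    (X : Finset (Fin n → ℤ)) (hXne : X.Nonempty)
    (hXbin : ∀ x ∈ X, ∀ j, x j = 0 ∨ x j = 1)
    (C : Matrix (Fin k) (Fin n) ℤ) (hC0 : ∀ i j, 0 ≤ C i j)
    (p : ℝ) (hp : 1 ≤ p)
    (r : Fin k → ℤ) (hr0 : ∀ i, 0 ≤ r i)
    (hfeas : ∀ x ∈ X, ∀ i, r i ≤ ∑ j, C i j * x j)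
    (rob : (Fin n → ℤ) → ℝ)
    (hrob : ∀ x, rob x =
      ((⨆ i, |(r i : ℝ)|) + (1 / p) * ∑ i, |(r i : ℝ)|) +
      ((⨆ i, |(∑ j, (C i j : ℝ) * (x j : ℝ)) - (r i : ℝ)|) +
        (1 / p) * ∑ i, |(∑ j, (C i j : ℝ) * (x j : ℝ)) - (r i : ℝ)|))
    (ε : ℝ) (hε : 0 < ε)
    (ε' : ℝ) (hε' : ε' = ε / (1 + k / p))
    (L : ℝ) (hL : 0 < L) (hLlow : ∀ x ∈ X, L ≤ rob x)
    (γ : ℝ) (hγ : γ = 3 * n / (ε' * L))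
    (Cbar : Matrix (Fin k) (Fin n) ℤ)
    (hCbar : ∀ i j, Cbar i j = ⌊γ * (C i j : ℝ)⌋)
    (rbar : Fin k → ℤ) (hrbar : ∀ i, rbar i = ⌊γ * (r i : ℝ)⌋)
    (robbar : (Fin n → ℤ) → ℝ)
    (hrobbar : ∀ x, robbar x =
      ((⨆ i, |(rbar i : ℝ)|) + (1 / p) * ∑ i, |(rbar i : ℝ)|) +
      ((⨆ i, |(∑ j, (Cbar i j : ℝ) * (x j : ℝ)) - (rbar i : ℝ)|) +
        (1 / p) * ∑ i, |(∑ j, (Cbar i j : ℝ) * (x j : ℝ)) - (rbar i : ℝ)|))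
    (xbar : Fin n → ℤ) (hxbar : xbar ∈ X)
    (hxbarmin : ∀ x ∈ X, robbar xbar ≤ robbar x)
    (xstar : Fin n → ℤ) (hxstar : xstar ∈ X)
    (hxstarmin : ∀ x ∈ X, rob xstar ≤ rob x) :
    rob xbar ≤ rob xstar + ε * L ∧ rob xstar + ε * L ≤ (1 + ε) * rob xstar := by
  haveI : Nonempty (Fin k) := ⟨⟨0, hk⟩⟩
  have hp0 : (0:ℝ) < p := lt_of_lt_of_le one_pos hp
  have hkp : (0:ℝ) < 1 + (k:ℝ) / p := by positivity
  have hn0 : (0:ℝ) < (n:ℝ) := by exact_mod_cast hn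
  have hn1 : (1:ℝ) ≤ (n:ℝ) := by exact_mod_cast hn
  have hε'0 : 0 < ε' := by rw [hε']; positivity
  have hγ0 : 0 < γ := by rw [hγ]; positivity
  -- basic facts about rbar
  have hrb_le : ∀ i, (rbar i : ℝ) ≤ γ * (r i : ℝ) := by
    intro i; rw [hrbar]; exact Int.floor_le _
  have hrb_ge : ∀ i, γ * (r i : ℝ) - 1 ≤ (rbar i : ℝ) := by
    intro i; rw [hrbar]; exact le_of_lt (Int.sub_one_lt_floor _)
  have hrb0 : ∀ i, (0:ℝ) ≤ (rbar i : ℝ) := by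
    intro i; rw [hrbar]
    have : (0:ℝ) ≤ γ * (r i : ℝ) := mul_nonneg hγ0.le (by exact_mod_cast hr0 i)
    exact_mod_cast Int.floor_nonneg.mpr this
  have hab_r : ∀ i, |(r i : ℝ)| = (r i : ℝ) := fun i => abs_of_nonneg (by exact_mod_cast hr0 i)
  have hab_rb : ∀ i, |(rbar i : ℝ)| = (rbar i : ℝ) := fun i => abs_of_nonneg (hrb0 i)
  -- the two key comparison bounds
  have key : ∀ x ∈ X,
      γ * rob x ≤ robbar x + (1 + n) * (1 + k / p) ∧
      robbar x ≤ γ * rob x + n * (1 + k / p) := by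
    intro x hx
    have hx0 : ∀ j, (0:ℝ) ≤ (x j : ℝ) := by
      intro j; rcases hXbin x hx j with h | h <;> simp [h]
    have hx1 : ∀ j, (x j : ℝ) ≤ 1 := by
      intro j; rcases hXbin x hx j with h | h <;> simp [h]
    have hsum_x : ∑ j, (x j : ℝ) ≤ n := by
      calc ∑ j, (x j : ℝ) ≤ ∑ _j : Fin n, (1:ℝ) := Finset.sum_le_sum fun j _ => hx1 j
        _ = n := by simp
    have hSb_le : ∀ i, ∑ j, (Cbar i j : ℝ) * (x j : ℝ) ≤ γ * ∑ j, (C i j : ℝ) * (x j : ℝ) := by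
      intro i
      rw [Finset.mul_sum]
      apply Finset.sum_le_sum
      intro j _
      have hf : (Cbar i j : ℝ) ≤ γ * (C i j : ℝ) := by rw [hCbar]; exact Int.floor_le _
      calc (Cbar i j : ℝ) * (x j : ℝ) ≤ (γ * (C i j : ℝ)) * (x j : ℝ) :=
            mul_le_mul_of_nonneg_right hf (hx0 j)
        _ = γ * ((C i j : ℝ) * (x j : ℝ)) := by ring
    have hSb_ge : ∀ i, γ * (∑ j, (C i j : ℝ) * (x j : ℝ)) - n ≤
        ∑ j, (Cbar i j : ℝ) * (x j : ℝ) := by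
      intro i
      have h1 : ∑ j, (γ * (C i j : ℝ) * (x j : ℝ) - (x j : ℝ)) ≤
          ∑ j, (Cbar i j : ℝ) * (x j : ℝ) := by
        apply Finset.sum_le_sum
        intro j _
        have hf : γ * (C i j : ℝ) - 1 ≤ (Cbar i j : ℝ) := by
          rw [hCbar]; exact le_of_lt (Int.sub_one_lt_floor _)
        nlinarith [hx0 j, mul_le_mul_of_nonneg_right hf (hx0 j)]
      have h2 : ∑ j, (γ * (C i j : ℝ) * (x j : ℝ) - (x j : ℝ)) =
          γ * (∑ j, (C i j : ℝ) * (x j : ℝ)) - ∑ j, (x j : ℝ) := by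
        rw [Finset.sum_sub_distrib, Finset.mul_sum]
        simp [mul_assoc]
      linarith [hsum_x]
    have hΔ0 : ∀ i, (0:ℝ) ≤ (∑ j, (C i j : ℝ) * (x j : ℝ)) - (r i : ℝ) := by
      intro i
      have h := hfeas x hx i
      have : (r i : ℝ) ≤ ∑ j, (C i j : ℝ) * (x j : ℝ) := by exact_mod_cast h
      linarith
    have hab_Δ : ∀ i, |(∑ j, (C i j : ℝ) * (x j : ℝ)) - (r i : ℝ)| =
        (∑ j, (C i j : ℝ) * (x j : ℝ)) - (r i : ℝ) := fun i => abs_of_nonneg (hΔ0 i)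
    -- bounds on the scaled deviation
    have hd_le : ∀ i, |(∑ j, (Cbar i j : ℝ) * (x j : ℝ)) - (rbar i : ℝ)| ≤
        γ * ((∑ j, (C i j : ℝ) * (x j : ℝ)) - (r i : ℝ)) + n := by
      intro i
      have hexp : γ * ((∑ j, (C i j : ℝ) * (x j : ℝ)) - (r i : ℝ)) =
          γ * (∑ j, (C i j : ℝ) * (x j : ℝ)) - γ * (r i : ℝ) := mul_sub _ _ _
      have hγΔ : (0:ℝ) ≤ γ * ((∑ j, (C i j : ℝ) * (x j : ℝ)) - (r i : ℝ)) :=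
        mul_nonneg hγ0.le (hΔ0 i)
      rw [abs_le]
      constructor
      · have := hSb_ge i; have := hrb_le i
        linarith
      · have := hSb_le i; have := hrb_ge i
        linarith
    have hd_ge : ∀ i, γ * ((∑ j, (C i j : ℝ) * (x j : ℝ)) - (r i : ℝ)) - n ≤
        |(∑ j, (Cbar i j : ℝ) * (x j : ℝ)) - (rbar i : ℝ)| := by
      intro i
      have h1 : γ * ((∑ j, (C i j : ℝ) * (x j : ℝ)) - (r i : ℝ)) - n ≤
          (∑ j, (Cbar i j : ℝ) * (x j : ℝ)) - (rbar i : ℝ) := by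
        have hexp : γ * ((∑ j, (C i j : ℝ) * (x j : ℝ)) - (r i : ℝ)) =
            γ * (∑ j, (C i j : ℝ) * (x j : ℝ)) - γ * (r i : ℝ) := mul_sub _ _ _
        have := hSb_ge i; have := hrb_le i; linarith
      exact h1.trans (le_abs_self _)
    -- sup bounds
    have A1 : γ * (⨆ i, |(r i : ℝ)|) ≤ (⨆ i, |(rbar i : ℝ)|) + 1 := by
      rw [Real.mul_iSup_of_nonneg hγ0.le]
      exact aux_ciSup_le_add fun i => by rw [hab_r, hab_rb]; linarith [hrb_ge i]
    have B1 : (⨆ i, |(rbar i : ℝ)|) ≤ γ * (⨆ i, |(r i : ℝ)|) + 0 := by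
      rw [Real.mul_iSup_of_nonneg hγ0.le]
      exact aux_ciSup_le_add fun i => by rw [hab_r, hab_rb]; linarith [hrb_le i]
    have A3 : γ * (⨆ i, |(∑ j, (C i j : ℝ) * (x j : ℝ)) - (r i : ℝ)|) ≤
        (⨆ i, |(∑ j, (Cbar i j : ℝ) * (x j : ℝ)) - (rbar i : ℝ)|) + n := by
      rw [Real.mul_iSup_of_nonneg hγ0.le]
      exact aux_ciSup_le_add fun i => by rw [hab_Δ]; linarith [hd_ge i]
    have B3 : (⨆ i, |(∑ j, (Cbar i j : ℝ) * (x j : ℝ)) - (rbar i : ℝ)|) ≤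
        γ * (⨆ i, |(∑ j, (C i j : ℝ) * (x j : ℝ)) - (r i : ℝ)|) + n := by
      rw [Real.mul_iSup_of_nonneg hγ0.le]
      exact aux_ciSup_le_add fun i => by rw [hab_Δ]; linarith [hd_le i]
    -- sum bounds
    have A2 : γ * (∑ i, |(r i : ℝ)|) ≤ (∑ i, |(rbar i : ℝ)|) + k := by
      rw [Finset.mul_sum]
      calc ∑ i, γ * |(r i : ℝ)| ≤ ∑ i, (|(rbar i : ℝ)| + 1) :=
            Finset.sum_le_sum fun i _ => by rw [hab_r, hab_rb]; linarith [hrb_ge i]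
        _ = (∑ i, |(rbar i : ℝ)|) + k := by rw [Finset.sum_add_distrib]; simp
    have B2 : (∑ i, |(rbar i : ℝ)|) ≤ γ * (∑ i, |(r i : ℝ)|) := by
      rw [Finset.mul_sum]
      exact Finset.sum_le_sum fun i _ => by rw [hab_r, hab_rb]; linarith [hrb_le i]
    have A4 : γ * (∑ i, |(∑ j, (C i j : ℝ) * (x j : ℝ)) - (r i : ℝ)|) ≤
        (∑ i, |(∑ j, (Cbar i j : ℝ) * (x j : ℝ)) - (rbar i : ℝ)|) + k * n := by
      rw [Finset.mul_sum]
      calc ∑ i, γ * |(∑ j, (C i j : ℝ) * (x j : ℝ)) - (r i : ℝ)| ≤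
          ∑ i, (|(∑ j, (Cbar i j : ℝ) * (x j : ℝ)) - (rbar i : ℝ)| + n) :=
            Finset.sum_le_sum fun i _ => by rw [hab_Δ]; linarith [hd_ge i]
        _ = _ := by rw [Finset.sum_add_distrib]; simp [mul_comm]
    have B4 : (∑ i, |(∑ j, (Cbar i j : ℝ) * (x j : ℝ)) - (rbar i : ℝ)|) ≤
        γ * (∑ i, |(∑ j, (C i j : ℝ) * (x j : ℝ)) - (r i : ℝ)|) + k * n := by
      rw [Finset.mul_sum]
      calc ∑ i, |(∑ j, (Cbar i j : ℝ) * (x j : ℝ)) - (rbar i : ℝ)| ≤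
          ∑ i, (γ * |(∑ j, (C i j : ℝ) * (x j : ℝ)) - (r i : ℝ)| + n) :=
            Finset.sum_le_sum fun i _ => by rw [hab_Δ]; linarith [hd_le i]
        _ = _ := by rw [Finset.sum_add_distrib]; simp [mul_comm]
    -- assemble
    have hp' : (0:ℝ) ≤ 1 / p := by positivity
    have A2' := mul_le_mul_of_nonneg_left A2 hp'
    have A4' := mul_le_mul_of_nonneg_left A4 hp'
    have B2' := mul_le_mul_of_nonneg_left B2 hp'
    have B4' := mul_le_mul_of_nonneg_left B4 hp'
    have hrobx := hrob x
    have hrobbarx := hrobbar x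
    have hkp' : (k:ℝ) / p = (1/p) * k := by ring
    constructor
    · rw [hrobx, hrobbarx]
      have e : (1 + (n:ℝ)) * (1 + k / p) = 1 + (1/p)*k + n + (1/p)*(k*n) := by
        field_simp; ring
      rw [e]
      linarith [A1, A2', A3, A4']
    · rw [hrobx, hrobbarx]
      have e : (n:ℝ) * (1 + k / p) = n + (1/p)*(k*n) := by field_simp
      rw [e]
      linarith [B1, B2', B3, B4']
  -- main chain
  have hgel : γ * (ε * L) = 3 * n * (1 + k / p) := by
    rw [hγ, hε']
    have h1 : ε' ≠ 0 := ne_of_gt hε'0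
    field_simp
  have hmain : γ * rob xbar ≤ γ * (rob xstar + ε * L) := by
    have k1 := (key xbar hxbar).1
    have k2 := (key xstar hxstar).2
    have k3 := hxbarmin xstar hxstar
    calc γ * rob xbar ≤ robbar xbar + (1 + n) * (1 + k / p) := k1
      _ ≤ robbar xstar + (1 + n) * (1 + k / p) := by linarith
      _ ≤ γ * rob xstar + n * (1 + k / p) + (1 + n) * (1 + k / p) := by linarith
      _ ≤ γ * rob xstar + 3 * n * (1 + k / p) := by
          have h3 : ((1:ℝ) + n + n) * (1 + k / p) ≤ (3 * n) * (1 + k / p) :=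
            mul_le_mul_of_nonneg_right (by linarith) hkp.le
          linarith
      _ = γ * (rob xstar + ε * L) := by rw [← hgel]; ring
  have h1 : rob xbar ≤ rob xstar + ε * L := le_of_mul_le_mul_left hmain hγ0
  refine ⟨h1, ?_⟩
  have h2 : L ≤ rob xstar := hLlow xstar hxstar
  have h3 : ε * L ≤ ε * rob xstar := mul_le_mul_of_nonneg_left h2 hε.le
  linarith
end

section
/- Let k ≥ 1, let Y ⊆ ℤ^k be a finite nonempty set of objective vectors with nonnegative components (maximization setting), let r ∈ ℤ^k satisfy r_i ≥ y_i for all y ∈ Y and all i (a feasible reference point for maximization), let α ≥ 1, and let Y_α ⊆ Y be such that for every Pareto optimal y ∈ Y (in the maximization sense) there exists y' ∈ Y_α with α·y'_i ≥ y_i for all i. Then for every monotone norm N on ℝ^k, max_{y∈Y_α} (N(r) − N(r − y)) ≥ (1/α)·max_{y∈Y} (N(r) − N(r − y)). -/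
/-- maximization: If `Y_α` is an `α`-approximate Pareto set for the
maximization problem and `r` is a feasible reference point (`r ≥ y` for all `y ∈ Y`),
then for every monotone norm `N`,
`max_{y ∈ Y_α} (N(r) − N(r − y)) ≥ (1/α)·max_{y ∈ Y} (N(r) − N(r − y))`. -/
theorem approx_pareto_gives_approx_reference_point_max
    (k : ℕ) (hk : 1 ≤ k)
    (Y : Finset (Fin k → ℤ)) (hYne : Y.Nonempty)
    (hYpos : ∀ y ∈ Y, ∀ i, (0 : ℤ) ≤ y i)
    (r : Fin k → ℤ)
    (hrfeas : ∀ y ∈ Y, ∀ i, y i ≤ r i)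
    (α : ℝ) (hα : 1 ≤ α)
    (Yα : Finset (Fin k → ℤ)) (hsub : Yα ⊆ Y)
    (happrox : ∀ y ∈ Y, (¬ ∃ y' ∈ Y, y' ≠ y ∧ ∀ i, y i ≤ y' i) →
      ∃ y' ∈ Yα, ∀ i, (y i : ℝ) ≤ α * (y' i : ℝ))
    (N : (Fin k → ℝ) → ℝ)
    (hN_add : ∀ a b, N (a + b) ≤ N a + N b)
    (hN_smul : ∀ (c : ℝ) (a : Fin k → ℝ), N (c • a) = |c| * N a)
    (hN_zero : ∀ a, N a = 0 ↔ a = 0)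
    (hN_mono : ∀ a b : Fin k → ℝ, (∀ i, 0 ≤ a i) → (∀ i, a i ≤ b i) → N a ≤ N b) :
    ∃ y' ∈ Yα, ∀ y ∈ Y,
      (1 / α) * (N (fun i => (r i : ℝ)) - N (fun i => (r i : ℝ) - (y i : ℝ))) ≤
      N (fun i => (r i : ℝ)) - N (fun i => (r i : ℝ) - (y' i : ℝ)) := by
  classical
  have hαpos : (0:ℝ) < α := lt_of_lt_of_le one_pos hα
  set R : Fin k → ℝ := fun i => (r i : ℝ) with hR
  set f : (Fin k → ℤ) → ℝ := fun y => N R - N (fun i => R i - (y i : ℝ)) with hf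
  -- maximizer of f over Y
  obtain ⟨y0, hy0Y, hy0max⟩ := Y.exists_max_image f hYne
  -- maximal (Pareto) element dominating y0
  set S : Finset (Fin k → ℤ) := Y.filter (fun y => y0 ≤ y) with hS
  have hSne : S.Nonempty := ⟨y0, Finset.mem_filter.2 ⟨hy0Y, le_refl _⟩⟩
  obtain ⟨ys, hysS, hysmax⟩ := S.exists_maximal hSne
  have hysY : ys ∈ Y := (Finset.mem_filter.1 hysS).1
  have hy0ys : y0 ≤ ys := (Finset.mem_filter.1 hysS).2
  have hpareto : ¬ ∃ y' ∈ Y, y' ≠ ys ∧ ∀ i, ys i ≤ y' i := by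
    rintro ⟨y', hy'Y, hne, hle⟩
    exact hne (le_antisymm (hysmax (Finset.mem_filter.2 ⟨hy'Y, le_trans hy0ys (fun i => hle i)⟩)
      (fun i => hle i)) (fun i => hle i))
  obtain ⟨y', hy'Yα, hy'dom⟩ := happrox ys hysY hpareto
  have hy'Y : y' ∈ Y := hsub hy'Yα
  -- monotonicity of f : f y0 ≤ f ys
  have hfys : ∀ y ∈ Y, f y ≤ f ys := by
    intro y hyY
    refine le_trans (hy0max y hyY) ?_
    have : N (fun i => R i - (ys i : ℝ)) ≤ N (fun i => R i - (y0 i : ℝ)) := by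
      refine hN_mono _ _ (fun i => ?_) (fun i => ?_)
      · have := hrfeas ys hysY i
        simp only [hR, sub_nonneg]
        exact_mod_cast this
      · have := hy0ys i
        have : (y0 i : ℝ) ≤ (ys i : ℝ) := by exact_mod_cast this
        linarith
    simp only [hf]
    linarith
  -- key inequality : (1/α) * f ys ≤ f y'
  have hkey : (1 / α) * f ys ≤ f y' := by
    have h1 : N (fun i => R i - (y' i : ℝ)) ≤ N (fun i => R i - (1/α) * (ys i : ℝ)) := by
      refine hN_mono _ _ (fun i => ?_) (fun i => ?_)
      · have := hrfeas y' hy'Y i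
        simp only [hR, sub_nonneg]
        exact_mod_cast this
      · have h := hy'dom i
        have : (1/α) * (ys i : ℝ) ≤ (y' i : ℝ) := by
          rw [div_mul_eq_mul_div, div_le_iff₀ hαpos]
          linarith
        linarith
    have h2 : N (fun i => R i - (1/α) * (ys i : ℝ)) ≤
        (1 - 1/α) * N R + (1/α) * N (fun i => R i - (ys i : ℝ)) := by
      have heq : (fun i => R i - (1/α) * (ys i : ℝ)) =
          (1 - 1/α) • R + (1/α) • (fun i => R i - (ys i : ℝ)) := by
        funext i
        simp only [Pi.add_apply, Pi.smul_apply, smul_eq_mul]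
        ring
      rw [heq]
      refine le_trans (hN_add _ _) ?_
      rw [hN_smul, hN_smul]
      have h1a : (0:ℝ) ≤ 1 - 1/α := by
        have : 1/α ≤ 1 := by
          rw [div_le_one hαpos]; exact hα
        linarith
      have h2a : (0:ℝ) ≤ 1/α := by positivity
      rw [abs_of_nonneg h1a, abs_of_nonneg h2a]
    simp only [hf]
    have hα' : (1/α) * (N R - N (fun i => R i - (ys i : ℝ))) =
        N R - ((1 - 1/α) * N R + (1/α) * N (fun i => R i - (ys i : ℝ))) := by ring
    linarith
  refine ⟨y', hy'Yα, fun y hyY => ?_⟩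
  have h3 : (1/α) * f y ≤ (1/α) * f ys := by
    have := hfys y hyY
    have h2a : (0:ℝ) ≤ 1/α := by positivity
    exact mul_le_mul_of_nonneg_left this h2a
  have := le_trans h3 hkey
  simpa [hf, hR] using this
end

section
/- Let k ≥ 1, let Y ⊆ ℤ^k be a finite nonempty set of objective vectors with nonnegative components (maximization setting), and let M ≥ 1 satisfy z_i ≤ M for all z ∈ Y and all i. Let y ∈ ℚ^k be a nonzero vector with 0 ≤ y_i ≤ M for all i, set I := {i ∈ [k] : y_i ≠ 0}, c := max_{i∈I} M/y_i, and r := c·y, and define weights λ by λ_i := 1/y_i for i ∈ I and λ_i := 0 otherwise. Set rob(z) := ‖r‖_∞^λ − ‖r − z‖_∞^λ. Let α > 1 and let y' ∈ Y satisfy α·rob(y') ≥ rob(z) for all z ∈ Y. Then: (a) if rob(y') ≥ rob(y), then y'_i ≥ y_i for all i ∈ [k]; and (b) if rob(y') < rob(y), then for every y'' ∈ Y there exists j ∈ I with y''_j < α·y_j. -/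
/-- maximization Gap reduction: with `c = max_{i : y_i ≠ 0} M/y_i`,
reference point `r = c·y`, weights `λ_i = 1/y_i` on `I = {i : y_i ≠ 0}` and `0` elsewhere,
and `rob(z) = ‖r‖_∞^λ − ‖r − z‖_∞^λ`, an `α`-approximate maximizer `y'` of `rob` over `Y`
answers the Gap problem: if `rob(y') ≥ rob(y)` then `y' ≥ y` componentwise, and if
`rob(y') < rob(y)` then every `y'' ∈ Y` has a component `j ∈ I` with `y''_j < α·y_j`. -/
theorem max_reference_point_gap
    (k : ℕ) (hk : 1 ≤ k)
    (Y : Finset (Fin k → ℤ)) (hYne : Y.Nonempty)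
    (hYpos : ∀ z ∈ Y, ∀ i, (0 : ℤ) ≤ z i)
    (M : ℝ) (hM : 1 ≤ M)
    (hYub : ∀ z ∈ Y, ∀ i, (z i : ℝ) ≤ M)
    (y : Fin k → ℚ) (hyne : y ≠ 0)
    (hy0 : ∀ i, 0 ≤ y i) (hyM : ∀ i, (y i : ℝ) ≤ M)
    (c : ℝ)
    (hc_ub : ∀ i, y i ≠ 0 → M / (y i : ℝ) ≤ c)
    (hc_mem : ∃ i, y i ≠ 0 ∧ c = M / (y i : ℝ))
    (lam : Fin k → ℝ)
    (hlam : ∀ i, lam i = if y i ≠ 0 then ((y i : ℝ))⁻¹ else 0)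
    (rob : (Fin k → ℝ) → ℝ)
    (hrob : ∀ z, rob z =
      (⨆ i, lam i * |c * (y i : ℝ)|) - ⨆ i, lam i * |c * (y i : ℝ) - z i|)
    (α : ℝ) (hα : 1 < α)
    (y' : Fin k → ℤ) (hy' : y' ∈ Y)
    (happrox : ∀ z ∈ Y, rob (fun i => (z i : ℝ)) ≤ α * rob (fun i => (y' i : ℝ))) :
    ((rob (fun i => (y i : ℝ)) ≤ rob (fun i => (y' i : ℝ))) →
      ∀ i, (y i : ℝ) ≤ (y' i : ℝ)) ∧
    ((rob (fun i => (y' i : ℝ)) < rob (fun i => (y i : ℝ))) →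
      ∀ y'' ∈ Y, ∃ j, y j ≠ 0 ∧ (y'' j : ℝ) < α * (y j : ℝ)) := by
  have hkpos : 0 < k := hk
  haveI : Nonempty (Fin k) := Fin.pos_iff_nonempty.mp hkpos
  obtain ⟨i0, hi0, hci0⟩ := hc_mem
  have hy0R : ∀ i, (0:ℝ) ≤ (y i : ℝ) := fun i => by exact_mod_cast hy0 i
  have hypos : ∀ i, y i ≠ 0 → (0:ℝ) < (y i : ℝ) := fun i h => by
    have h1 : (0:ℚ) < y i := lt_of_le_of_ne (hy0 i) (Ne.symm h)
    exact_mod_cast h1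
  have hc1 : (1:ℝ) ≤ c := by
    rw [hci0, le_div_iff₀ (hypos i0 hi0)]
    simpa using hyM i0
  have hc0 : (0:ℝ) ≤ c := le_trans zero_le_one hc1
  have hcyM : ∀ i, y i ≠ 0 → M ≤ c * (y i : ℝ) := fun i h => by
    have h2 := hc_ub i h
    rw [div_le_iff₀ (hypos i h)] at h2
    linarith [h2]
  -- term formula
  have hterm : ∀ (z : Fin k → ℝ), (∀ i, 0 ≤ z i) → (∀ i, z i ≤ M) →
      ∀ i, lam i * |c * (y i : ℝ) - z i| =
        if y i ≠ 0 then c - z i / (y i : ℝ) else 0 := by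
    intro z h0 hub i
    rw [hlam i]
    by_cases h : y i ≠ 0
    · rw [if_pos h, if_pos h]
      have hyi := hypos i h
      have hz : z i ≤ c * (y i:ℝ) := le_trans (hub i) (hcyM i h)
      rw [abs_of_nonneg (by linarith)]
      field_simp
    · rw [if_neg h, if_neg h, zero_mul]
  have hbdd : ∀ (f : Fin k → ℝ), BddAbove (Set.range f) := fun f =>
    Finite.bddAbove_range f
  -- term bounds for z ∈ [0, M]^k
  have htub : ∀ (z : Fin k → ℝ), (∀ i, 0 ≤ z i) → (∀ i, z i ≤ M) →
      ∀ i, lam i * |c * (y i : ℝ) - z i| ≤ c := by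
    intro z h0 hub i
    rw [hterm z h0 hub i]
    by_cases h : y i ≠ 0
    · rw [if_pos h]
      have : 0 ≤ z i / (y i : ℝ) := div_nonneg (h0 i) (hy0R i)
      linarith
    · rw [if_neg h]; exact hc0
  -- first sup = c
  have hsup0 : (⨆ i, lam i * |c * (y i : ℝ)|) = c := by
    have h0 : ∀ i, (0:ℝ) ≤ (0:Fin k → ℝ) i := fun i => le_refl 0
    have hub : ∀ i, (0:Fin k → ℝ) i ≤ M := fun i => by simpa using le_trans zero_le_one hM
    have he : ∀ i, lam i * |c * (y i : ℝ)| = lam i * |c * (y i : ℝ) - (0:Fin k → ℝ) i| := by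
      intro i; simp
    apply le_antisymm
    · apply ciSup_le
      intro i
      rw [he i]
      exact htub _ h0 hub i
    · have := le_ciSup (hbdd (fun i => lam i * |c * (y i : ℝ)|)) i0
      refine le_trans (le_of_eq ?_) this
      rw [he i0, hterm _ h0 hub i0, if_pos hi0]
      simp
  -- general formula for rob on [0,M]^k
  have hrob' : ∀ (z : Fin k → ℝ), (∀ i, 0 ≤ z i) → (∀ i, z i ≤ M) →
      rob z = c - ⨆ i, (if y i ≠ 0 then c - z i / (y i : ℝ) else 0) := by
    intro z h0 hub
    rw [hrob z, hsup0]
    congr 1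
    exact iSup_congr (hterm z h0 hub)
  -- rob y = 1
  have hy0' : ∀ i, (0:ℝ) ≤ ((fun i => (y i : ℝ)) i) := hy0R
  have hyub' : ∀ i, ((fun i => (y i : ℝ)) i) ≤ M := hyM
  have hroby : rob (fun i => (y i : ℝ)) = 1 := by
    rw [hrob' _ hy0' hyub']
    have : (⨆ i, (if y i ≠ 0 then c - (y i : ℝ) / (y i : ℝ) else 0)) = c - 1 := by
      apply le_antisymm
      · apply ciSup_le
        intro i
        by_cases h : y i ≠ 0
        · rw [if_pos h, div_self (by exact_mod_cast h)]
        · rw [if_neg h]; linarith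
      · have := le_ciSup (hbdd fun i => (if y i ≠ 0 then c - (y i : ℝ) / (y i : ℝ) else 0)) i0
        refine le_trans (le_of_eq ?_) this
        rw [if_pos hi0, div_self (by exact_mod_cast hi0)]
    rw [this]; ring
  -- bounds for elements of Y
  have hz0 : ∀ z ∈ Y, ∀ i, (0:ℝ) ≤ ((fun i => ((z i : ℤ) : ℝ)) i) := by
    intro z hz i
    show (0:ℝ) ≤ (z i : ℝ)
    exact_mod_cast hYpos z hz i
  have hzub : ∀ z ∈ Y, ∀ i, ((fun i => ((z i : ℤ) : ℝ)) i) ≤ M := fun z hz i => hYub z hz i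
  -- rob y' ≥ 0
  have hroby'0 : 0 ≤ rob (fun i => (y' i : ℝ)) := by
    rw [hrob' _ (hz0 y' hy') (hzub y' hy')]
    have : (⨆ i, (if y i ≠ 0 then c - ((y' i : ℝ)) / (y i : ℝ) else 0)) ≤ c := by
      apply ciSup_le
      intro i
      have := htub _ (hz0 y' hy') (hzub y' hy') i
      rwa [hterm _ (hz0 y' hy') (hzub y' hy') i] at this
    linarith
  constructor
  · -- part (a)
    intro hge i
    rw [hroby] at hge
    rw [hrob' _ (hz0 y' hy') (hzub y' hy')] at hge
    by_cases h : y i ≠ 0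
    · have hterm_le : (if y i ≠ 0 then c - ((y' i : ℝ)) / (y i : ℝ) else 0) ≤
          ⨆ i, (if y i ≠ 0 then c - ((y' i : ℝ)) / (y i : ℝ) else 0) :=
        le_ciSup (f := fun i => if y i ≠ 0 then c - ((y' i : ℝ)) / (y i : ℝ) else 0) (hbdd _) i
      rw [if_pos h] at hterm_le
      have h1 : (1:ℝ) ≤ (y' i : ℝ) / (y i : ℝ) := by linarith
      have hyi := hypos i h
      rw [le_div_iff₀ hyi] at h1
      linarith
    · push_neg at h
      rw [h]
      push_cast
      exact_mod_cast hYpos y' hy' i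
  · -- part (b)
    intro hlt y'' hy''
    rw [hroby] at hlt
    have hry'' : rob (fun i => ((y'' i : ℤ) : ℝ)) ≤ α * rob (fun i => (y' i : ℝ)) :=
      happrox y'' hy''
    have hrlt : rob (fun i => ((y'' i : ℤ) : ℝ)) < α := by
      have : α * rob (fun i => (y' i : ℝ)) < α * 1 := by
        apply mul_lt_mul_of_pos_left hlt (by linarith)
      linarith
    by_cases hcα : α ≤ c
    · rw [hrob' _ (hz0 y'' hy'') (hzub y'' hy'')] at hrlt
      have hsgt : c - α < ⨆ i, (if y i ≠ 0 then c - ((y'' i : ℝ)) / (y i : ℝ) else 0) := by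
        linarith
      obtain ⟨j, hj⟩ := exists_lt_of_lt_ciSup hsgt
      by_cases h : y j ≠ 0
      · rw [if_pos h] at hj
        refine ⟨j, h, ?_⟩
        have hyj := hypos j h
        have : (y'' j : ℝ) / (y j : ℝ) < α := by linarith
        rw [div_lt_iff₀ hyj] at this
        linarith
      · rw [if_neg h] at hj
        linarith
    · push_neg at hcα
      refine ⟨i0, hi0, ?_⟩
      have h1 : (y'' i0 : ℝ) ≤ M := hYub y'' hy'' i0
      have h2 : M ≤ c * (y i0 : ℝ) := hcyM i0 hi0
      have h3 : c * (y i0 : ℝ) < α * (y i0 : ℝ) :=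
        mul_lt_mul_of_pos_right hcα (hypos i0 hi0)
      linarith
end

section
/- Let k ≥ 1 and M ≥ 1, let Y ⊆ ℤ^k be a finite nonempty set of objective vectors with Y ⊆ [0,M]^k, and let r ∈ ℤ^k be a feasible reference point. Let α > 1 and let y ∈ ℚ^k satisfy 0 ≤ y_i ≤ M and y_i ≥ α·r_i for all i, and let q be a positive integer with q·y_i ∈ ℤ for all i. Let p be a real number with p ≥ max{(log k)/(log(1 + 1/(2M))), 2kMq}. Set I := {i ∈ [k] : y_i = r_i = 0}, define weights λ by λ_i := 2 for i ∈ I and λ_i := 1/(y_i − r_i) otherwise, and set rob(z) := ⦀r⦀_p^λ + ⦀z − r⦀_p^λ. If y' ∈ Y satisfies rob(y') ≤ rob(y), then y'_i ≤ y_i for all i ∈ [k]. -/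
/-- Gap reduction for cornered `p`-norms, positive answer: with
`p ≥ max{log k / log(1 + 1/(2M)), 2kMq}`, weights `λ_i = 2` on
`I = {i : y_i = r_i = 0}` and `λ_i = 1/(y_i − r_i)` otherwise, and
`rob(z) = ⦀r⦀_p^λ + ⦀z − r⦀_p^λ` the weighted cornered `p`-norm objective,
any `y' ∈ Y` with `rob(y') ≤ rob(y)` satisfies `y' ≤ y` componentwise. -/
theorem cornered_p_gap_positive_answer
    (k : ℕ) (hk : 1 ≤ k) (M : ℝ) (hM : 1 ≤ M)
    (Y : Finset (Fin k → ℤ)) (hYne : Y.Nonempty)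
    (hYbound : ∀ z ∈ Y, ∀ i, (0 : ℤ) ≤ z i ∧ (z i : ℝ) ≤ M)
    (r : Fin k → ℤ) (hr0 : ∀ i, 0 ≤ r i)
    (hrfeas : ∀ z ∈ Y, ∀ i, r i ≤ z i)
    (α : ℝ) (hα : 1 < α)
    (y : Fin k → ℚ) (hy0 : ∀ i, 0 ≤ y i) (hyM : ∀ i, (y i : ℝ) ≤ M)
    (hyr : ∀ i, α * (r i : ℝ) ≤ (y i : ℝ))
    (q : ℕ) (hq : 1 ≤ q) (hqy : ∀ i, ∃ m : ℤ, (q : ℚ) * y i = (m : ℚ))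
    (p : ℝ)
    (hp₁ : Real.log k / Real.log (1 + 1 / (2 * M)) ≤ p)
    (hp₂ : 2 * k * M * q ≤ p)
    (lam : Fin k → ℚ)
    (hlam : ∀ i, lam i =
      if y i = 0 ∧ r i = 0 then 2 else (y i - (r i : ℚ))⁻¹)
    (rob : (Fin k → ℝ) → ℝ)
    (hrob : ∀ z, rob z =
      ((⨆ i, (lam i : ℝ) * |(r i : ℝ)|) + (1 / p) * ∑ i, (lam i : ℝ) * |(r i : ℝ)|) +
      ((⨆ i, (lam i : ℝ) * |z i - (r i : ℝ)|) +
        (1 / p) * ∑ i, (lam i : ℝ) * |z i - (r i : ℝ)|))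
    (y' : Fin k → ℤ) (hy' : y' ∈ Y)
    (hle : rob (fun i => (y' i : ℝ)) ≤ rob (fun i => (y i : ℝ))) :
    ∀ i, (y' i : ℚ) ≤ y i := by
  haveI : Nonempty (Fin k) := ⟨⟨0, hk⟩⟩
  intro j
  by_contra hcon
  push_neg at hcon
  have hk' : (1:ℝ) ≤ k := by exact_mod_cast hk
  have hq' : (1:ℝ) ≤ q := by exact_mod_cast hq
  have hkM : (1:ℝ) ≤ (k:ℝ)*M := by nlinarith
  have hkMq : (1:ℝ) ≤ (k:ℝ)*M*q := by nlinarith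
  have hp0 : (0:ℝ) < p := by nlinarith
  have h2Mq : (0:ℝ) < 2*M*q := by nlinarith
  have hMq1 : (1:ℝ) ≤ M * (q:ℝ) := by nlinarith
  -- strict inequality r_i < y_i outside I
  have hgt : ∀ i, ¬(y i = 0 ∧ r i = 0) → (r i : ℚ) < y i := by
    intro i h
    rcases lt_or_eq_of_le (hr0 i) with h1 | h1
    · have h0 : (0:ℝ) < (r i : ℝ) := by exact_mod_cast h1
      have h2 : (r i : ℝ) < α * r i := by nlinarith
      have h3 : (r i : ℝ) < (y i : ℝ) := lt_of_lt_of_le h2 (hyr i)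
      exact_mod_cast h3
    · have hyne : y i ≠ 0 := fun hy => h ⟨hy, h1.symm⟩
      have h2 : (0:ℚ) < y i := lt_of_le_of_ne (hy0 i) (Ne.symm hyne)
      calc (r i : ℚ) = 0 := by exact_mod_cast h1.symm
        _ < y i := h2
  have hlam_nonneg : ∀ i, (0:ℝ) ≤ (lam i : ℝ) := by
    intro i
    rw [hlam i]
    split
    · norm_num
    · next h =>
      have hd : (0:ℚ) < y i - r i := sub_pos.mpr (hgt i h)
      have : (0:ℚ) ≤ (y i - (r i:ℚ))⁻¹ := (inv_pos.mpr hd).le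
      exact_mod_cast this
  have hterm_y : ∀ i, (lam i : ℝ) * |(y i : ℝ) - (r i : ℝ)| ≤ 1 := by
    intro i
    rw [hlam i]
    split
    · next h =>
      have h1 : ((y i : ℚ) : ℝ) = 0 := by exact_mod_cast h.1
      have h2 : ((r i : ℤ) : ℝ) = 0 := by exact_mod_cast h.2
      simp [h1, h2]
    · next h =>
      have hd : (0:ℚ) < y i - r i := sub_pos.mpr (hgt i h)
      have hdR : (0:ℝ) < (y i : ℝ) - (r i : ℝ) := by exact_mod_cast hd
      rw [abs_of_pos hdR]
      have he : (((y i - (r i:ℚ))⁻¹ : ℚ) : ℝ) * ((y i : ℝ) - (r i : ℝ)) = 1 := by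
        push_cast
        field_simp
      exact le_of_eq he
  have hsupY : (⨆ i, (lam i : ℝ) * |(y i : ℝ) - (r i : ℝ)|) ≤ 1 := ciSup_le hterm_y
  have hsumY : (∑ i, (lam i : ℝ) * |(y i : ℝ) - (r i : ℝ)|) ≤ (k:ℝ) := by
    calc (∑ i, (lam i : ℝ) * |(y i : ℝ) - (r i : ℝ)|) ≤ ∑ _i : Fin k, (1:ℝ) :=
          Finset.sum_le_sum (fun i _ => hterm_y i)
      _ = (k:ℝ) := by simp
  have hbdd : BddAbove (Set.range fun i => (lam i : ℝ) * |(y' i : ℝ) - (r i : ℝ)|) :=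
    Set.Finite.bddAbove (Set.finite_range _)
  have hsup' : (lam j : ℝ) * |(y' j : ℝ) - (r j : ℝ)| ≤
      ⨆ i, (lam i : ℝ) * |(y' i : ℝ) - (r i : ℝ)| := le_ciSup hbdd j
  have hsum' : (0:ℝ) ≤ ∑ i, (lam i : ℝ) * |(y' i : ℝ) - (r i : ℝ)| :=
    Finset.sum_nonneg (fun i _ => mul_nonneg (hlam_nonneg i) (abs_nonneg _))
  rw [hrob, hrob] at hle
  have h1p : (0:ℝ) ≤ 1/p := by positivity
  have hml : (1/p) * (∑ i, (lam i : ℝ) * |(y i : ℝ) - (r i : ℝ)|) ≤ (1/p) * (k:ℝ) :=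
    mul_le_mul_of_nonneg_left hsumY h1p
  have hms : (0:ℝ) ≤ (1/p) * ∑ i, (lam i : ℝ) * |(y' i : ℝ) - (r i : ℝ)| :=
    mul_nonneg h1p hsum'
  have hkp : (1/p) * (k:ℝ) = (k:ℝ)/p := by ring
  have key : (lam j : ℝ) * |(y' j : ℝ) - (r j : ℝ)| ≤ 1 + (k:ℝ)/p := by
    linarith
  have hkp2 : (k:ℝ)/p ≤ 1/(2*M*q) := by
    rw [div_le_div_iff₀ hp0 h2Mq]
    linarith
  by_cases hj : y j = 0 ∧ r j = 0
  · have hy'1 : (1:ℤ) ≤ y' j := by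
      have h0 : (0:ℚ) < (y' j : ℚ) := by
        calc (0:ℚ) = y j := hj.1.symm
          _ < (y' j : ℚ) := hcon
      have : (0:ℤ) < y' j := by exact_mod_cast h0
      omega
    have h2le : (2:ℝ) ≤ (lam j : ℝ) * |(y' j : ℝ) - (r j : ℝ)| := by
      rw [hlam j, if_pos hj]
      have hr : ((r j : ℤ) : ℝ) = 0 := by exact_mod_cast hj.2
      have h1 : (1:ℝ) ≤ (y' j : ℝ) := by exact_mod_cast hy'1
      rw [hr, sub_zero, abs_of_nonneg (by linarith)]
      push_cast
      linarith
    have hhalf : (1:ℝ)/(2*M*q) ≤ 1/2 := by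
      rw [div_le_div_iff₀ h2Mq (by norm_num : (0:ℝ) < 2)]
      linarith
    linarith
  · have hd : (0:ℚ) < y j - r j := sub_pos.mpr (hgt j hj)
    have hdR : (0:ℝ) < (y j : ℝ) - (r j : ℝ) := by exact_mod_cast hd
    have hr0R : (0:ℝ) ≤ (r j : ℝ) := by exact_mod_cast hr0 j
    have hdM : (y j : ℝ) - (r j : ℝ) ≤ M := by
      have := hyM j
      linarith
    obtain ⟨m, hm⟩ := hqy j
    have hq0 : (0:ℚ) < (q:ℚ) := by exact_mod_cast hq
    have hgap : (1:ℚ) ≤ (q:ℚ) * (y' j : ℚ) - (q:ℚ) * y j := by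
      have h1 : (0:ℚ) < (q:ℚ) * (y' j : ℚ) - (q:ℚ) * y j := by
        have := mul_pos hq0 (sub_pos.mpr hcon)
        linarith
      have h2 : (q:ℚ) * (y' j : ℚ) - (q:ℚ) * y j = (((q:ℤ) * y' j - m : ℤ) : ℚ) := by
        push_cast
        rw [← hm]
      have h3 : (0:ℤ) < (q:ℤ) * y' j - m := by
        rw [h2] at h1
        exact_mod_cast h1
      have h4 : (1:ℤ) ≤ (q:ℤ) * y' j - m := h3
      rw [h2]
      exact_mod_cast h4
    have hgapR : (1:ℝ)/(q:ℝ) ≤ (y' j : ℝ) - (y j : ℝ) := by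
      have hgR : (1:ℝ) ≤ (q:ℝ) * (y' j : ℝ) - (q:ℝ) * (y j : ℝ) := by exact_mod_cast hgap
      rw [div_le_iff₀ (by linarith : (0:ℝ) < (q:ℝ))]
      linarith
    have hr' : (0:ℝ) ≤ (y' j : ℝ) - (r j : ℝ) := by
      have h1 : (r j : ℤ) ≤ y' j := hrfeas _ hy' j
      have h2 : ((r j : ℤ) : ℝ) ≤ ((y' j : ℤ) : ℝ) := by exact_mod_cast h1
      linarith
    have hΛ : (lam j : ℝ) = ((y j : ℝ) - (r j : ℝ))⁻¹ := by
      rw [hlam j, if_neg hj]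
      push_cast
      ring
    have hqM : (0:ℝ) < (q:ℝ) * M := by positivity
    have hlow : 1 + 1/((q:ℝ)*M) ≤ (lam j : ℝ) * |(y' j : ℝ) - (r j : ℝ)| := by
      rw [hΛ, abs_of_nonneg hr', inv_mul_eq_div, le_div_iff₀ hdR]
      have e1 : (1/((q:ℝ)*M)) * ((y j : ℝ) - (r j : ℝ)) ≤ (1/((q:ℝ)*M)) * M :=
        mul_le_mul_of_nonneg_left hdM (by positivity)
      have e2 : (1/((q:ℝ)*M)) * M = 1/(q:ℝ) := by
        field_simp
      have e3 : (1 + 1/((q:ℝ)*M)) * ((y j : ℝ) - (r j : ℝ)) =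
          ((y j : ℝ) - (r j : ℝ)) + (1/((q:ℝ)*M)) * ((y j : ℝ) - (r j : ℝ)) := by ring
      linarith
    have hfin : (1:ℝ)/((q:ℝ)*M) ≤ 1/(2*M*q) := by linarith
    rw [div_le_div_iff₀ hqM h2Mq] at hfin
    linarith
end
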